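/- arXiv:1805.05940 — 4 statements merged into one kernel-verified Lean document; each statement's English description precedes it below -/
import Mathlib

section
/- Let (φ_n) be a sequence of real numbers with liminf_{n→∞} φ_n ≥ 0. If there exists a real sequence (ε_n) with ε_n → 0 such that φ_{n+1} − φ_n ≤ −φ_n/(n+1) + ε_n/n for all n ∈ N, then φ_n → 0. -/
open Filter Topology

/-- If `(φ n)` is a real sequence with `liminf φ ≥ 0` (i.e. for every `c < 0`,
eventually `c < φ n`), and there is a sequence `ε n → 0` with
`φ (n+1) - φ n ≤ - φ n / (n+1) + ε n / n` for all `n ≥ 1`, then `φ n → 0`. -/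
theorem fictitious_play_sequence_lemma
    (φ ε : ℕ → ℝ)
    (hliminf : ∀ c < (0 : ℝ), ∀ᶠ n in atTop, c < φ n)
    (hε : Tendsto ε atTop (𝓝 0))
    (hrec : ∀ n : ℕ, 1 ≤ n → φ (n + 1) - φ n ≤ - φ n / (n + 1) + ε n / n) :
    Tendsto φ atTop (𝓝 0) := by
  -- key inductive bound : n * φ n ≤ φ 1 + 2 * ∑_{k=1}^{n-1} |ε k|
  have key : ∀ n : ℕ, 1 ≤ n →
      (n : ℝ) * φ n ≤ φ 1 + 2 * ∑ k ∈ Finset.Ico 1 n, |ε k| := by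
    intro n hn
    induction n with
    | zero => omega
    | succ m ih =>
      rcases Nat.lt_or_ge m 1 with hm | hm
      · interval_cases m
        simp
      · have ihm := ih hm
        have hrec' := hrec m hm
        have hM : (1 : ℝ) ≤ (m : ℝ) := by exact_mod_cast hm
        have hM0 : (0 : ℝ) < (m : ℝ) := by linarith
        have hM1 : (0 : ℝ) < (m : ℝ) + 1 := by linarith
        have habs1 : ε m ≤ |ε m| := le_abs_self _
        -- step : (m+1) * φ (m+1) ≤ m * φ m + 2 * |ε m|
        have step : ((m : ℝ) + 1) * φ (m + 1) ≤ (m : ℝ) * φ m + 2 * |ε m| := by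
          have h2 : ((m : ℝ) * ((m : ℝ) + 1)) * (φ (m + 1) - φ m)
              ≤ ((m : ℝ) * ((m : ℝ) + 1)) * (- φ m / ((m : ℝ) + 1) + ε m / (m : ℝ)) :=
            mul_le_mul_of_nonneg_left hrec' (by positivity)
          have h3 : ((m : ℝ) * ((m : ℝ) + 1)) * (- φ m / ((m : ℝ) + 1) + ε m / (m : ℝ))
              = - (m : ℝ) * φ m + ((m : ℝ) + 1) * ε m := by
            field_simp
          rw [h3] at h2
          have habs0 : (0 : ℝ) ≤ |ε m| := abs_nonneg _
          nlinarith [mul_le_mul_of_nonneg_left habs1 (le_of_lt hM1)]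
        have hsum : ∑ k ∈ Finset.Ico 1 (m + 1), |ε k|
            = (∑ k ∈ Finset.Ico 1 m, |ε k|) + |ε m| := Finset.sum_Ico_succ_top hm _
        push_cast
        rw [hsum]
        linarith
  -- the majorant tends to 0
  have habs : Tendsto (fun n => |ε n|) atTop (𝓝 0) := by
    simpa using hε.abs
  have hces : Tendsto (fun n : ℕ => (∑ k ∈ Finset.range n, |ε k|) / n) atTop (𝓝 0) := by
    simpa [div_eq_inv_mul] using habs.cesaro
  have hconst : Tendsto (fun n : ℕ => φ 1 / n) atTop (𝓝 0) :=
    tendsto_const_div_atTop_nhds_zero_nat _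
  have hG : Tendsto (fun n : ℕ => (φ 1 + 2 * ∑ k ∈ Finset.range n, |ε k|) / n)
      atTop (𝓝 0) := by
    have := hconst.add (hces.const_mul 2)
    simp only [mul_zero, add_zero] at this
    convert this using 2 with n
    rw [add_div, mul_div_assoc]
  refine tendsto_order.2 ⟨fun c hc => hliminf c hc, fun c hc => ?_⟩
  have hev := (hG.eventually (eventually_lt_nhds hc)).and (eventually_ge_atTop 1)
  filter_upwards [hev] with n ⟨hlt, hn1⟩
  have hn0 : (0 : ℝ) < (n : ℝ) := by exact_mod_cast hn1
  have hle : φ n ≤ (φ 1 + 2 * ∑ k ∈ Finset.Ico 1 n, |ε k|) / n := by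
    rw [le_div_iff₀ hn0]
    have := key n hn1
    linarith
  have hsumle : ∑ k ∈ Finset.Ico 1 n, |ε k| ≤ ∑ k ∈ Finset.range n, |ε k| := by
    rw [Finset.range_eq_Ico]
    exact Finset.sum_le_sum_of_subset_of_nonneg
      (Finset.Ico_subset_Ico (Nat.zero_le 1) le_rfl) (fun i _ _ => abs_nonneg _)
  calc φ n ≤ (φ 1 + 2 * ∑ k ∈ Finset.Ico 1 n, |ε k|) / n := hle
    _ ≤ (φ 1 + 2 * ∑ k ∈ Finset.range n, |ε k|) / n := by
        gcongr
    _ < c := hlt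
end

section
/- Let X be a Polish space, C ⊆ X compact, and F: C × P(C) → R continuous. If F is monotone and satisfies the unique minimizer condition, then F has at most one equilibrium: if η̃ and η̃' both satisfy supp(η̃) ⊆ argmin_{x∈C} F(x,η̃) and supp(η̃') ⊆ argmin_{x∈C} F(x,η̃'), then η̃ = η̃'. -/
/-!
Under the unique minimizer condition an equilibrium `η` is the Dirac mass at the unique
minimiser `x₀` of `F(·, η)`. For two equilibria `δ_{x₀}` and `δ_{x₁}` monotonicity reads
`F(x₀, η) - F(x₀, η') - F(x₁, η) + F(x₁, η') ≥ 0`; adding `F(x₁, η') ≤ F(x₀, η')` gives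
`F(x₁, η) ≤ F(x₀, η)`, so `x₁` also minimises `F(·, η)` and hence `x₁ = x₀`.
-/

open MeasureTheory Filter Topology

noncomputable section

/-- The topological support of a measure. -/
def msupp {X : Type*} [TopologicalSpace X] [MeasurableSpace X] (μ : Measure X) : Set X :=
  {x | ∀ U : Set X, IsOpen U → x ∈ U → 0 < μ U}

variable {X : Type*} [MetricSpace X] [CompleteSpace X] [TopologicalSpace.SeparableSpace X]
  [MeasurableSpace X] [BorelSpace X]

/-- The set of (Borel) probability measures concentrated on `C`, identified with `P(C)`. -/
def PC (C : Set X) : Set (ProbabilityMeasure X) := {η | (η : Measure X) Cᶜ = 0}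

lemma msupp_eq_support {Y : Type*} [TopologicalSpace Y] [MeasurableSpace Y] (μ : Measure Y) :
    msupp μ = μ.support := by
  ext x
  simp only [msupp, Measure.support_eq_forall_isOpen, Set.mem_ofPred_eq]
  exact forall_congr' fun _ => Imp.swap

lemma MeasureTheory.Measure.eq_dirac_of_support_subset_singleton {Y : Type*} [TopologicalSpace Y]
    [HereditarilyLindelofSpace Y] [MeasurableSpace Y] {μ : Measure Y} [IsProbabilityMeasure μ]
    {a : Y} (h : μ.support ⊆ {a}) : μ = Measure.dirac a := by
  have hae : ∀ᵐ y ∂μ, y ∈ ({a} : Set Y) := mem_of_superset Measure.support_mem_ae h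
  have hone : μ {a} = 1 := by
    rw [← Measure.restrict_apply_univ, Measure.restrict_eq_self_of_ae_mem hae, measure_univ]
  rw [← Measure.restrict_eq_self_of_ae_mem hae, Measure.restrict_singleton, hone, one_smul]

lemma eq_of_unique_minimizer_of_monotone {α : Type*} {C : Set α} {f g : α → ℝ} {x₀ x₁ : α}
    (hx₀ : x₀ ∈ C ∧ ∀ y ∈ C, f x₀ ≤ f y) (hx₀uniq : ∀ x, (x ∈ C ∧ ∀ y ∈ C, f x ≤ f y) → x = x₀)
    (hx₁ : x₁ ∈ C ∧ ∀ y ∈ C, g x₁ ≤ g y)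
    (hmono : 0 ≤ (f x₀ - g x₀) - (f x₁ - g x₁)) : x₁ = x₀ := by
  have hfx₁ : f x₁ ≤ f x₀ := by linarith [hx₁.2 x₀ hx₀.1]
  exact hx₀uniq x₁ ⟨hx₁.1, fun y hy => hfx₁.trans (hx₀.2 y hy)⟩

theorem equilibrium_unique_general
    (C : Set X)
    (F : X → ProbabilityMeasure X → ℝ)
    (hmono : ∀ μ ∈ PC C, ∀ ν ∈ PC C, μ ≠ ν →
      0 ≤ (∫ x, (F x μ - F x ν) ∂(μ : Measure X)) - ∫ x, (F x μ - F x ν) ∂(ν : Measure X))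
    (huniq : ∀ η ∈ PC C, ∃! x, x ∈ C ∧ ∀ y ∈ C, F x η ≤ F y η)
    (η η' : ProbabilityMeasure X) (hηC : η ∈ PC C) (hη'C : η' ∈ PC C)
    (hsupp : msupp (η : Measure X) ⊆ {x | x ∈ C ∧ ∀ y ∈ C, F x η ≤ F y η})
    (hsupp' : msupp (η' : Measure X) ⊆ {x | x ∈ C ∧ ∀ y ∈ C, F x η' ≤ F y η'}) :
    η = η' := by
  by_contra hne
  obtain ⟨x₀, hx₀, hx₀uniq⟩ := huniq η hηC
  obtain ⟨x₁, hx₁, hx₁uniq⟩ := huniq η' hη'C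
  have hηδ : (η : Measure X) = Measure.dirac x₀ :=
    Measure.eq_dirac_of_support_subset_singleton fun z hz =>
      hx₀uniq z (hsupp (by rwa [msupp_eq_support]))
  have hη'δ : (η' : Measure X) = Measure.dirac x₁ :=
    Measure.eq_dirac_of_support_subset_singleton fun z hz =>
      hx₁uniq z (hsupp' (by rwa [msupp_eq_support]))
  have hmono' := hmono η hηC η' hη'C hne
  rw [hηδ, hη'δ, integral_dirac, integral_dirac] at hmono'
  have hx : x₁ = x₀ := eq_of_unique_minimizer_of_monotone (g := (F · η')) hx₀ hx₀uniq hx₁ hmono'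
  exact hne (ProbabilityMeasure.toMeasure_injective (by rw [hηδ, hη'δ, hx]))

/-- If `F` is monotone and satisfies the unique minimizer condition, then `F` has at most
one equilibrium. -/
theorem equilibrium_unique
    (C : Set X) (hC : IsCompact C) (hCne : C.Nonempty)
    (F : X → ProbabilityMeasure X → ℝ)
    (hFcont : ContinuousOn (fun p : X × ProbabilityMeasure X => F p.1 p.2) (C ×ˢ PC C))
    (hmono : ∀ μ ∈ PC C, ∀ ν ∈ PC C, μ ≠ ν →
      0 ≤ (∫ x, (F x μ - F x ν) ∂(μ : Measure X)) - ∫ x, (F x μ - F x ν) ∂(ν : Measure X))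
    (huniq : ∀ η ∈ PC C, ∃! x, x ∈ C ∧ ∀ y ∈ C, F x η ≤ F y η)
    (η η' : ProbabilityMeasure X) (hηC : η ∈ PC C) (hη'C : η' ∈ PC C)
    (hsupp : msupp (η : Measure X) ⊆ {x | x ∈ C ∧ ∀ y ∈ C, F x η ≤ F y η})
    (hsupp' : msupp (η' : Measure X) ⊆ {x | x ∈ C ∧ ∀ y ∈ C, F x η' ≤ F y η'}) :
    η = η' :=
  equilibrium_unique_general C F hmono huniq η η' hηC hη'C hsupp hsupp'
end
end

section
/- In the finite MFG with separable cost c_{xy}(p,M) = K(x,y,p) + f(x,M), assume f and g are Lipschitz with respect to their second argument. Then there exists C > 0 such that for all P, P' ∈ K_{S,T} and all Borel probability measures η, η' on K_{S,T}: (i) |F(P,η) − F(P,η') − F(P',η) + F(P',η')| ≤ C |P − P'|_∞ d_1(η,η'); and (ii) |F(P,η) − F(P,η')| ≤ C d_1(η,η'), where d_1 is the Wasserstein-1 distance on probability measures over K_{S,T} with the sup norm metric. -/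
open MeasureTheory Filter Topology

noncomputable section

/-- The Kantorovich–Rubinstein (Wasserstein-1) distance between two measures,
defined as the infimum over couplings of the integral of the distance. -/
def W1 {X : Type*} [MeasurableSpace X] [PseudoMetricSpace X] (μ ν : Measure X) : ℝ :=
  sInf {r : ℝ | ∃ γ : Measure (X × X), γ.map Prod.fst = μ ∧ γ.map Prod.snd = ν ∧
    r = ∫ p, dist p.1 p.2 ∂γ}

/-- The simplex of probability vectors on a finite set `S`. -/
def simplex (S : Type*) [Fintype S] : Set (S → ℝ) :=
  {p | (∀ x, 0 ≤ p x) ∧ ∑ x, p x = 1}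

/-- The set of transition kernels on `S` with time horizon `N`. -/
def kernels (S : Type*) [Fintype S] (N : ℕ) : Set (S → S → Fin N → ℝ) :=
  {P | ∀ x k, (fun y => P x y k) ∈ simplex S}

/-- The marginal flow `M_P^{M₀}`. -/
def flow {S : Type*} [Fintype S] {N : ℕ} (M0 : S → ℝ) (P : S → S → Fin N → ℝ) :
    ℕ → S → ℝ
  | 0 => M0
  | k + 1 => fun x =>
      if h : k < N then ∑ y, flow M0 P k y * P y x ⟨k, h⟩ else flow M0 P k x

/-- The cost functional `J_M(P)` of the finite MFG. -/
def Jcost {S : Type*} [Fintype S] {N : ℕ}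
    (c : S → S → (S → ℝ) → (S → ℝ) → ℝ) (g : S → (S → ℝ) → ℝ) (M0 : S → ℝ)
    (M : ℕ → S → ℝ) (P : S → S → Fin N → ℝ) : ℝ :=
  (∑ k : Fin N, ∑ x, ∑ y,
      flow M0 P (k : ℕ) x * P x y k * c x y (fun z => P x z k) (M (k : ℕ))) +
    ∑ x, flow M0 P N x * g x (M N)

/-- The averaged marginal flow `M_η(k) = ∫ M_P^{M₀}(·,k) dη(P)`. -/
def avgFlow {S : Type*} [Fintype S] {N : ℕ} (M0 : S → ℝ)
    (η : Measure (S → S → Fin N → ℝ)) (k : ℕ) : S → ℝ :=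
  fun x => ∫ P, flow M0 P k x ∂η

/-- `F(P, η) := J_{M_η}(P)`. -/
def Fmfg {S : Type*} [Fintype S] {N : ℕ}
    (c : S → S → (S → ℝ) → (S → ℝ) → ℝ) (g : S → (S → ℝ) → ℝ) (M0 : S → ℝ)
    (P : S → S → Fin N → ℝ) (η : Measure (S → S → Fin N → ℝ)) : ℝ :=
  Jcost c g M0 (fun k => avgFlow M0 η k) P

section AuxLemmas

variable {S : Type*} [Fintype S] {N : ℕ}

lemma flow_succ (M0 : S → ℝ) (P : S → S → Fin N → ℝ) (k : ℕ) (x : S) :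
    flow M0 P (k+1) x =
      if h : k < N then ∑ y, flow M0 P k y * P y x ⟨k, h⟩ else flow M0 P k x := rfl

lemma entry_abs_le_norm (Q : S → S → Fin N → ℝ) (x y : S) (k : Fin N) :
    |Q x y k| ≤ ‖Q‖ := by
  calc |Q x y k| = ‖Q x y k‖ := rfl
    _ ≤ ‖Q x y‖ := norm_le_pi_norm (Q x y) k
    _ ≤ ‖Q x‖ := norm_le_pi_norm (Q x) y
    _ ≤ ‖Q‖ := norm_le_pi_norm Q x

lemma simplex_le_one {p : S → ℝ} (hp : p ∈ simplex S) (x : S) : p x ≤ 1 := by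
  have := Finset.single_le_sum (f := p) (fun i _ => hp.1 i) (Finset.mem_univ x)
  rw [hp.2] at this; exact this

lemma flow_mem_simplex (M0 : S → ℝ) (hM0 : M0 ∈ simplex S) {P : S → S → Fin N → ℝ}
    (hP : P ∈ kernels S N) : ∀ k, flow M0 P k ∈ simplex S := by
  intro k
  induction k with
  | zero => exact hM0
  | succ k ih =>
    by_cases h : k < N
    · constructor
      · intro x
        rw [flow_succ, dif_pos h]
        exact Finset.sum_nonneg fun y _ => mul_nonneg (ih.1 y) ((hP y ⟨k, h⟩).1 x)
      · have : ∀ x, flow M0 P (k+1) x = ∑ y, flow M0 P k y * P y x ⟨k, h⟩ := by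
          intro x; rw [flow_succ, dif_pos h]
        simp only [this]
        rw [Finset.sum_comm]
        have : ∀ y, ∑ x, flow M0 P k y * P y x ⟨k, h⟩ = flow M0 P k y := by
          intro y; rw [← Finset.mul_sum, (hP y ⟨k, h⟩).2, mul_one]
        simp only [this]; exact ih.2
    · have : ∀ x, flow M0 P (k+1) x = flow M0 P k x := by
        intro x; rw [flow_succ, dif_neg h]
      constructor
      · intro x; rw [this]; exact ih.1 x
      · simp only [this]; exact ih.2

lemma flow_abs_le_one (M0 : S → ℝ) (hM0 : M0 ∈ simplex S) {P : S → S → Fin N → ℝ}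
    (hP : P ∈ kernels S N) (k : ℕ) (x : S) : |flow M0 P k x| ≤ 1 := by
  have hm := flow_mem_simplex M0 hM0 hP k
  rw [abs_of_nonneg (hm.1 x)]
  exact simplex_le_one hm x

lemma flow_lip (M0 : S → ℝ) (hM0 : M0 ∈ simplex S) {P P' : S → S → Fin N → ℝ}
    (hP : P ∈ kernels S N) (hP' : P' ∈ kernels S N) :
    ∀ k x, |flow M0 P k x - flow M0 P' k x| ≤
      ((Fintype.card S : ℝ) + 1) ^ (k + 1) * ‖P - P'‖ := by
  have hd : (0:ℝ) ≤ ‖P - P'‖ := norm_nonneg _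
  have hs1 : (1:ℝ) ≤ (Fintype.card S : ℝ) + 1 := by
    have := Nat.cast_nonneg (α := ℝ) (Fintype.card S); linarith
  intro k
  induction k with
  | zero =>
    intro x
    simp only [flow, sub_self, abs_zero]
    positivity
  | succ k ih =>
    intro x
    by_cases h : k < N
    · rw [flow_succ, flow_succ, dif_pos h, dif_pos h, ← Finset.sum_sub_distrib]
      have hterm : ∀ y, |flow M0 P k y * P y x ⟨k, h⟩ - flow M0 P' k y * P' y x ⟨k, h⟩|
          ≤ ((Fintype.card S : ℝ) + 1) ^ (k + 1) * ‖P - P'‖ + ‖P - P'‖ := by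
        intro y
        have e1 : flow M0 P k y * P y x ⟨k, h⟩ - flow M0 P' k y * P' y x ⟨k, h⟩
            = (flow M0 P k y - flow M0 P' k y) * P y x ⟨k, h⟩
              + flow M0 P' k y * (P y x ⟨k, h⟩ - P' y x ⟨k, h⟩) := by ring
        rw [e1]
        refine (abs_add_le _ _).trans ?_
        rw [abs_mul, abs_mul]
        have h1 : |P y x ⟨k, h⟩| ≤ 1 := by
          rw [abs_of_nonneg ((hP y ⟨k, h⟩).1 x)]
          exact simplex_le_one (hP y ⟨k, h⟩) x
        have h2 : |flow M0 P' k y| ≤ 1 := flow_abs_le_one M0 hM0 hP' k y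
        have h3 : |P y x ⟨k, h⟩ - P' y x ⟨k, h⟩| ≤ ‖P - P'‖ := by
          have := entry_abs_le_norm (P - P') y x ⟨k, h⟩
          simpa using this
        have h4 := ih y
        nlinarith [abs_nonneg (flow M0 P k y - flow M0 P' k y),
          abs_nonneg (P y x ⟨k, h⟩ - P' y x ⟨k, h⟩),
          abs_nonneg (flow M0 P' k y), abs_nonneg (P y x ⟨k, h⟩)]
      calc |∑ y, (flow M0 P k y * P y x ⟨k, h⟩ - flow M0 P' k y * P' y x ⟨k, h⟩)|
          ≤ ∑ y, |flow M0 P k y * P y x ⟨k, h⟩ - flow M0 P' k y * P' y x ⟨k, h⟩| :=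
            Finset.abs_sum_le_sum_abs _ _
        _ ≤ ∑ _y : S, (((Fintype.card S : ℝ) + 1) ^ (k + 1) * ‖P - P'‖ + ‖P - P'‖) :=
            Finset.sum_le_sum fun y _ => hterm y
        _ = (Fintype.card S : ℝ) * (((Fintype.card S : ℝ) + 1) ^ (k + 1) * ‖P - P'‖ + ‖P - P'‖) := by
            rw [Finset.sum_const, Finset.card_univ, nsmul_eq_mul]
        _ ≤ ((Fintype.card S : ℝ) + 1) ^ (k + 1 + 1) * ‖P - P'‖ := by
            have hpow : ((Fintype.card S : ℝ) + 1) ≤ ((Fintype.card S : ℝ) + 1) ^ (k + 1) :=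
              le_self_pow₀ hs1 (Nat.succ_ne_zero k)
            have : ((Fintype.card S : ℝ) + 1) ^ (k + 1 + 1)
                = ((Fintype.card S : ℝ) + 1) * ((Fintype.card S : ℝ) + 1) ^ (k + 1) := by
              rw [pow_succ]; ring
            nlinarith [pow_nonneg (by positivity : (0:ℝ) ≤ (Fintype.card S : ℝ) + 1) (k+1)]
    · rw [flow_succ, flow_succ, dif_neg h, dif_neg h]
      refine (ih x).trans ?_
      have hpow : ((Fintype.card S : ℝ) + 1) ^ (k + 1) ≤ ((Fintype.card S : ℝ) + 1) ^ (k + 2) :=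
        pow_le_pow_right₀ hs1 (by omega)
      nlinarith

lemma flow_continuous (M0 : S → ℝ) (k : ℕ) (x : S) :
    Continuous fun P : S → S → Fin N → ℝ => flow M0 P k x := by
  induction k generalizing x with
  | zero => exact continuous_const
  | succ k ih =>
    simp only [flow_succ]
    by_cases h : k < N
    · simp only [dif_pos h]
      exact continuous_finset_sum _ fun y _ => (ih y).mul
        ((continuous_apply (⟨k, h⟩ : Fin N)).comp
          ((continuous_apply x).comp (continuous_apply y)))
    · simp only [dif_neg h]; exact ih x

lemma kernels_isClosed : IsClosed (kernels S N) := by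
  have heq : kernels S N = (⋂ (x : S) (k : Fin N) (y : S),
      {P : S → S → Fin N → ℝ | 0 ≤ P x y k}) ∩
      ⋂ (x : S) (k : Fin N), {P : S → S → Fin N → ℝ | ∑ y, P x y k = 1} := by
    ext P
    simp only [kernels, simplex, Set.mem_setOf_eq, Set.mem_inter_iff, Set.mem_iInter]
    constructor
    · intro h; exact ⟨fun x k y => (h x k).1 y, fun x k => (h x k).2⟩
    · intro h x k; exact ⟨fun y => h.1 x k y, h.2 x k⟩
  rw [heq]
  have hev : ∀ (x y : S) (k : Fin N),
      Continuous fun P : S → S → Fin N → ℝ => P x y k := fun x y k =>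
    (continuous_apply k).comp ((continuous_apply y).comp (continuous_apply x))
  exact IsClosed.inter
    (isClosed_iInter fun x => isClosed_iInter fun k => isClosed_iInter fun y =>
      isClosed_le continuous_const (hev x y k))
    (isClosed_iInter fun x => isClosed_iInter fun k =>
      isClosed_eq (continuous_finset_sum _ fun y _ => hev x y k) continuous_const)

lemma kernels_norm_sub_le_one {Q Q' : S → S → Fin N → ℝ}
    (hQ : Q ∈ kernels S N) (hQ' : Q' ∈ kernels S N) : ‖Q - Q'‖ ≤ 1 := by
  rw [pi_norm_le_iff_of_nonneg zero_le_one]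
  intro x
  rw [pi_norm_le_iff_of_nonneg zero_le_one]
  intro y
  rw [pi_norm_le_iff_of_nonneg zero_le_one]
  intro k
  simp only [Pi.sub_apply, Real.norm_eq_abs]
  have h1 := (hQ x k).1 y
  have h2 := simplex_le_one (hQ x k) y
  have h3 := (hQ' x k).1 y
  have h4 := simplex_le_one (hQ' x k) y
  rw [abs_sub_le_iff]; constructor <;> linarith

lemma integrable_flow (M0 : S → ℝ) (hM0 : M0 ∈ simplex S)
    (μ : Measure (S → S → Fin N → ℝ)) [IsProbabilityMeasure μ]
    (hμ : ∀ᵐ Q ∂μ, Q ∈ kernels S N) (k : ℕ) (x : S) :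
    Integrable (fun Q => flow M0 Q k x) μ := by
  refine Integrable.mono' (integrable_const 1)
    (flow_continuous M0 k x).aestronglyMeasurable ?_
  filter_upwards [hμ] with Q hQ
  rw [Real.norm_eq_abs]
  exact flow_abs_le_one M0 hM0 hQ k x

lemma avgFlow_mem_simplex (M0 : S → ℝ) (hM0 : M0 ∈ simplex S)
    (μ : Measure (S → S → Fin N → ℝ)) [IsProbabilityMeasure μ]
    (hμ : ∀ᵐ Q ∂μ, Q ∈ kernels S N) (k : ℕ) :
    avgFlow M0 μ k ∈ simplex S := by
  constructor
  · intro x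
    refine integral_nonneg_of_ae ?_
    filter_upwards [hμ] with Q hQ
    exact (flow_mem_simplex M0 hM0 hQ k).1 x
  · show ∑ x, ∫ Q, flow M0 Q k x ∂μ = 1
    rw [← integral_finset_sum _ fun x _ => integrable_flow M0 hM0 μ hμ k x]
    have : ∫ Q, (∑ x, flow M0 Q k x) ∂μ = ∫ _Q, (1:ℝ) ∂μ := by
      refine integral_congr_ae ?_
      filter_upwards [hμ] with Q hQ
      exact (flow_mem_simplex M0 hM0 hQ k).2
    rw [this]; simp

lemma le_mul_W1 {X : Type*} [MeasurableSpace X] [PseudoMetricSpace X] {μ ν : Measure X}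
    {Q a : ℝ} (ha : 0 ≤ a) (γ₀ : Measure (X × X))
    (h1 : γ₀.map Prod.fst = μ) (h2 : γ₀.map Prod.snd = ν)
    (h : ∀ γ : Measure (X × X), γ.map Prod.fst = μ → γ.map Prod.snd = ν →
      Q ≤ a * ∫ p, dist p.1 p.2 ∂γ) :
    Q ≤ a * W1 μ ν := by
  rcases eq_or_lt_of_le ha with rfl | ha'
  · have := h γ₀ h1 h2
    simpa using this.trans (by simp)
  · have hne : Set.Nonempty {r : ℝ | ∃ γ : Measure (X × X), γ.map Prod.fst = μ ∧
        γ.map Prod.snd = ν ∧ r = ∫ p, dist p.1 p.2 ∂γ} :=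
      ⟨_, γ₀, h1, h2, rfl⟩
    have hlb : Q / a ≤ W1 μ ν := by
      refine le_csInf hne ?_
      rintro r ⟨γ, hg1, hg2, rfl⟩
      rw [div_le_iff₀ ha']
      have := h γ hg1 hg2
      linarith
    calc Q = a * (Q / a) := by field_simp
      _ ≤ a * W1 μ ν := mul_le_mul_of_nonneg_left hlb (le_of_lt ha')

lemma abs_sum_add_sum_le {S : Type*} [Fintype S] {N : ℕ}
    (a : Fin N → S → S → ℝ) (u : Fin N → S → ℝ) (b w : S → ℝ) {A D : ℝ}
    (hA : 0 ≤ A)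
    (ha : ∀ k x y, |a k x y| ≤ A) (hb : ∀ x, |b x| ≤ A)
    (hu : ∀ k x, |u k x| ≤ D) (hw : ∀ x, |w x| ≤ D) :
    |(∑ k : Fin N, ∑ x, ∑ y, a k x y * u k x) + ∑ x, b x * w x| ≤
      ((N : ℝ) * Fintype.card S * Fintype.card S + Fintype.card S) * (A * D) := by
  have hterm : ∀ (k : Fin N) (x y : S), |a k x y * u k x| ≤ A * D := by
    intro k x y
    rw [abs_mul]
    exact mul_le_mul (ha k x y) (hu k x) (abs_nonneg _) hA
  have h1 : |∑ k : Fin N, ∑ x, ∑ y, a k x y * u k x| ≤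
      (N : ℝ) * Fintype.card S * Fintype.card S * (A * D) := by
    calc |∑ k : Fin N, ∑ x, ∑ y, a k x y * u k x|
        ≤ ∑ k : Fin N, |∑ x, ∑ y, a k x y * u k x| := Finset.abs_sum_le_sum_abs _ _
      _ ≤ ∑ _k : Fin N, (Fintype.card S : ℝ) * Fintype.card S * (A * D) := by
          refine Finset.sum_le_sum fun k _ => ?_
          calc |∑ x, ∑ y, a k x y * u k x| ≤ ∑ x, |∑ y, a k x y * u k x| :=
              Finset.abs_sum_le_sum_abs _ _
            _ ≤ ∑ _x : S, (Fintype.card S : ℝ) * (A * D) := by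
                refine Finset.sum_le_sum fun x _ => ?_
                calc |∑ y, a k x y * u k x| ≤ ∑ y, |a k x y * u k x| :=
                    Finset.abs_sum_le_sum_abs _ _
                  _ ≤ ∑ _y : S, (A * D) := Finset.sum_le_sum fun y _ => hterm k x y
                  _ = (Fintype.card S : ℝ) * (A * D) := by
                      rw [Finset.sum_const, Finset.card_univ, nsmul_eq_mul]
            _ = (Fintype.card S : ℝ) * Fintype.card S * (A * D) := by
                rw [Finset.sum_const, Finset.card_univ, nsmul_eq_mul]; ring
      _ = (N : ℝ) * Fintype.card S * Fintype.card S * (A * D) := by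
          rw [Finset.sum_const, Finset.card_univ, Fintype.card_fin, nsmul_eq_mul]; ring
  have h2 : |∑ x, b x * w x| ≤ (Fintype.card S : ℝ) * (A * D) := by
    calc |∑ x, b x * w x| ≤ ∑ x, |b x * w x| := Finset.abs_sum_le_sum_abs _ _
      _ ≤ ∑ _x : S, (A * D) := Finset.sum_le_sum fun x _ => by
          rw [abs_mul]; exact mul_le_mul (hb x) (hw x) (abs_nonneg _) hA
      _ = (Fintype.card S : ℝ) * (A * D) := by
          rw [Finset.sum_const, Finset.card_univ, nsmul_eq_mul]
  calc |(∑ k : Fin N, ∑ x, ∑ y, a k x y * u k x) + ∑ x, b x * w x|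
      ≤ |∑ k : Fin N, ∑ x, ∑ y, a k x y * u k x| + |∑ x, b x * w x| := abs_add_le _ _
    _ ≤ (N : ℝ) * Fintype.card S * Fintype.card S * (A * D) +
        (Fintype.card S : ℝ) * (A * D) := add_le_add h1 h2
    _ = ((N : ℝ) * Fintype.card S * Fintype.card S + Fintype.card S) * (A * D) := by ring

end AuxLemmas

set_option maxHeartbeats 1600000 in
/-- In the finite MFG with separable cost, if `f` and `g` are Lipschitz with respect to
their second argument, then `F` satisfies the two Lipschitz-type estimates of
Lemma 3.9 of the paper. -/
theorem Fmfg_lipschitz_estimates {S : Type*} [Fintype S] [Nonempty S] (N : ℕ)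
    (c : S → S → (S → ℝ) → (S → ℝ) → ℝ) (K : S → S → (S → ℝ) → ℝ)
    (f : S → (S → ℝ) → ℝ) (g : S → (S → ℝ) → ℝ)
    (hsep : ∀ x y p M, c x y p M = K x y p + f x M)
    (L : ℝ)
    (hfLip : ∀ x, ∀ M ∈ simplex S, ∀ M' ∈ simplex S, |f x M - f x M'| ≤ L * ‖M - M'‖)
    (hgLip : ∀ x, ∀ M ∈ simplex S, ∀ M' ∈ simplex S, |g x M - g x M'| ≤ L * ‖M - M'‖)
    (M0 : S → ℝ) (hM0 : M0 ∈ simplex S) :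
    ∃ C > (0 : ℝ), ∀ P ∈ kernels S N, ∀ P' ∈ kernels S N,
      ∀ η η' : Measure (S → S → Fin N → ℝ),
        IsProbabilityMeasure η → IsProbabilityMeasure η' →
        η (kernels S N)ᶜ = 0 → η' (kernels S N)ᶜ = 0 →
        |Fmfg c g M0 P η - Fmfg c g M0 P η' - Fmfg c g M0 P' η + Fmfg c g M0 P' η'| ≤
            C * ‖P - P'‖ * W1 η η' ∧
          |Fmfg c g M0 P η - Fmfg c g M0 P η'| ≤ C * W1 η η' := by
  classical
  have hs0 : (0:ℝ) ≤ (Fintype.card S : ℝ) := Nat.cast_nonneg _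
  have hs1 : (1:ℝ) ≤ (Fintype.card S : ℝ) + 1 := by linarith
  set B : ℝ := ((Fintype.card S : ℝ) + 1) ^ (N + 1) with hB
  have hB0 : (0:ℝ) ≤ B := by positivity
  set L₀ : ℝ := max L 0 with hL₀
  have hL₀0 : (0:ℝ) ≤ L₀ := le_max_right _ _
  have hLL₀ : L ≤ L₀ := le_max_left _ _
  set c₀ : ℝ := (N : ℝ) * Fintype.card S * Fintype.card S + Fintype.card S with hc₀
  have hc₀0 : (0:ℝ) ≤ c₀ := by positivity
  refine ⟨c₀ * ((B + 1) * (L₀ * B)) + 1, by positivity, ?_⟩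
  intro P hP P' hP' η η' hηp hη'p hηc hη'c
  haveI := hηp; haveI := hη'p
  have hKm : MeasurableSet (kernels S N) := kernels_isClosed.measurableSet
  have hηk : ∀ᵐ Q ∂η, Q ∈ kernels S N := by
    rw [ae_iff]; exact hηc
  have hη'k : ∀ᵐ Q ∂η', Q ∈ kernels S N := by
    rw [ae_iff]; exact hη'c
  -- the two averaged flows are in the simplex
  have hMη : ∀ k, avgFlow M0 η k ∈ simplex S := avgFlow_mem_simplex M0 hM0 η hηk
  have hMη' : ∀ k, avgFlow M0 η' k ∈ simplex S := avgFlow_mem_simplex M0 hM0 η' hη'k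
  -- abbreviations for the differences
  set u : Fin N → S → ℝ :=
    fun k x => f x (avgFlow M0 η (k : ℕ)) - f x (avgFlow M0 η' (k : ℕ)) with hu_def
  set w : S → ℝ := fun x => g x (avgFlow M0 η N) - g x (avgFlow M0 η' N) with hw_def
  -- key algebraic identity
  have key : ∀ Q : S → S → Fin N → ℝ, Fmfg c g M0 Q η - Fmfg c g M0 Q η' =
      (∑ k : Fin N, ∑ x, ∑ y, (flow M0 Q (k : ℕ) x * Q x y k) * u k x) +
        ∑ x, flow M0 Q N x * w x := by
    intro Q
    simp only [Fmfg, Jcost, hsep, add_sub_add_comm, ← Finset.sum_sub_distrib, hu_def, hw_def]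
    refine congrArg₂ (· + ·)
      (Finset.sum_congr rfl fun k _ => Finset.sum_congr rfl fun x _ =>
        Finset.sum_congr rfl fun y _ => by ring)
      (Finset.sum_congr rfl fun x _ => by ring)
  -- the master estimate for an arbitrary coupling
  have master : ∀ γ : Measure ((S → S → Fin N → ℝ) × (S → S → Fin N → ℝ)),
      γ.map Prod.fst = η → γ.map Prod.snd = η' →
      (|Fmfg c g M0 P η - Fmfg c g M0 P η' - Fmfg c g M0 P' η + Fmfg c g M0 P' η'| ≤
          (c₀ * ((B + 1) * (L₀ * B)) + 1) * ‖P - P'‖ * ∫ p, dist p.1 p.2 ∂γ) ∧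
        |Fmfg c g M0 P η - Fmfg c g M0 P η'| ≤
          (c₀ * ((B + 1) * (L₀ * B)) + 1) * ∫ p, dist p.1 p.2 ∂γ := by
    intro γ hg1 hg2
    haveI hγp : IsProbabilityMeasure γ := by
      refine ⟨?_⟩
      have h : (γ.map Prod.fst) Set.univ = 1 := by rw [hg1, measure_univ]
      rwa [Measure.map_apply measurable_fst MeasurableSet.univ, Set.preimage_univ] at h
    have hγk : ∀ᵐ p ∂γ, p.1 ∈ kernels S N ∧ p.2 ∈ kernels S N := by
      have h1 : γ {p : (S → S → Fin N → ℝ) × (S → S → Fin N → ℝ) |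
          ¬ p.1 ∈ kernels S N} = 0 := by
        have : γ (Prod.fst ⁻¹' (kernels S N)ᶜ) = 0 := by
          rw [← Measure.map_apply measurable_fst hKm.compl, hg1]; exact hηc
        exact this
      have h2 : γ {p : (S → S → Fin N → ℝ) × (S → S → Fin N → ℝ) |
          ¬ p.2 ∈ kernels S N} = 0 := by
        have : γ (Prod.snd ⁻¹' (kernels S N)ᶜ) = 0 := by
          rw [← Measure.map_apply measurable_snd hKm.compl, hg2]; exact hη'c
        exact this
      exact ((ae_iff).2 h1).and ((ae_iff).2 h2)
    set r : ℝ := ∫ p, dist p.1 p.2 ∂γ with hr_def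
    have hr0 : 0 ≤ r := integral_nonneg fun p => dist_nonneg
    -- integrability facts
    have hdist_int : Integrable (fun p : (S → S → Fin N → ℝ) × (S → S → Fin N → ℝ) =>
        dist p.1 p.2) γ := by
      refine Integrable.mono' (integrable_const 1)
        (continuous_fst.dist continuous_snd).aestronglyMeasurable ?_
      filter_upwards [hγk] with p hp
      rw [Real.norm_eq_abs, abs_of_nonneg dist_nonneg, dist_eq_norm]
      exact kernels_norm_sub_le_one hp.1 hp.2
    have hc1 : ∀ (k : ℕ) (x : S), Integrable (fun p : (S → S → Fin N → ℝ) ×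
        (S → S → Fin N → ℝ) => flow M0 p.1 k x) γ := by
      intro k x
      refine Integrable.mono' (integrable_const 1)
        (((flow_continuous M0 k x).comp continuous_fst).aestronglyMeasurable) ?_
      filter_upwards [hγk] with p hp
      rw [Real.norm_eq_abs]
      exact flow_abs_le_one M0 hM0 hp.1 k x
    have hc2 : ∀ (k : ℕ) (x : S), Integrable (fun p : (S → S → Fin N → ℝ) ×
        (S → S → Fin N → ℝ) => flow M0 p.2 k x) γ := by
      intro k x
      refine Integrable.mono' (integrable_const 1)
        (((flow_continuous M0 k x).comp continuous_snd).aestronglyMeasurable) ?_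
      filter_upwards [hγk] with p hp
      rw [Real.norm_eq_abs]
      exact flow_abs_le_one M0 hM0 hp.2 k x
    -- transfer the averaged flows to the coupling
    have htrans1 : ∀ (k : ℕ) (x : S), avgFlow M0 η k x = ∫ p, flow M0 p.1 k x ∂γ := by
      intro k x
      show ∫ Q, flow M0 Q k x ∂η = _
      rw [← hg1, integral_map measurable_fst.aemeasurable
        (flow_continuous M0 k x).aestronglyMeasurable]
    have htrans2 : ∀ (k : ℕ) (x : S), avgFlow M0 η' k x = ∫ p, flow M0 p.2 k x ∂γ := by
      intro k x
      show ∫ Q, flow M0 Q k x ∂η' = _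
      rw [← hg2, integral_map measurable_snd.aemeasurable
        (flow_continuous M0 k x).aestronglyMeasurable]
    -- componentwise bound on the difference of averaged flows
    have havgdiff : ∀ k : ℕ, k ≤ N → ∀ x, |avgFlow M0 η k x - avgFlow M0 η' k x| ≤ B * r := by
      intro k hk x
      rw [htrans1 k x, htrans2 k x, ← integral_sub (hc1 k x) (hc2 k x)]
      calc |∫ p, (flow M0 p.1 k x - flow M0 p.2 k x) ∂γ|
          ≤ ∫ p, |flow M0 p.1 k x - flow M0 p.2 k x| ∂γ := by
            simpa [Real.norm_eq_abs] using norm_integral_le_integral_norm (μ := γ)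
              (fun p : (S → S → Fin N → ℝ) × (S → S → Fin N → ℝ) =>
                flow M0 p.1 k x - flow M0 p.2 k x)
        _ ≤ ∫ p, B * dist p.1 p.2 ∂γ := by
            refine integral_mono_ae ((hc1 k x).sub (hc2 k x)).abs (hdist_int.const_mul B) ?_
            filter_upwards [hγk] with p hp
            have hf := flow_lip M0 hM0 hp.1 hp.2 k x
            have hpow : ((Fintype.card S : ℝ) + 1) ^ (k + 1) ≤ B :=
              pow_le_pow_right₀ hs1 (by omega)
            rw [dist_eq_norm]
            nlinarith [norm_nonneg (p.1 - p.2)]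
        _ = B * r := by rw [integral_const_mul]
    have hMnorm : ∀ k : ℕ, k ≤ N → ‖avgFlow M0 η k - avgFlow M0 η' k‖ ≤ B * r := by
      intro k hk
      rw [pi_norm_le_iff_of_nonneg (by positivity)]
      intro x
      rw [Pi.sub_apply, Real.norm_eq_abs]
      exact havgdiff k hk x
    -- bounds on u and w
    have hub : ∀ (k : Fin N) (x : S), |u k x| ≤ L₀ * (B * r) := by
      intro k x
      have h1 := hfLip x _ (hMη (k : ℕ)) _ (hMη' (k : ℕ))
      have h2 := hMnorm (k : ℕ) (le_of_lt k.isLt)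
      have h3 : (0:ℝ) ≤ ‖avgFlow M0 η (k : ℕ) - avgFlow M0 η' (k : ℕ)‖ := norm_nonneg _
      calc |u k x| ≤ L * ‖avgFlow M0 η (k : ℕ) - avgFlow M0 η' (k : ℕ)‖ := h1
        _ ≤ L₀ * (B * r) := by nlinarith
    have hwb : ∀ x : S, |w x| ≤ L₀ * (B * r) := by
      intro x
      have h1 := hgLip x _ (hMη N) _ (hMη' N)
      have h2 := hMnorm N le_rfl
      have h3 : (0:ℝ) ≤ ‖avgFlow M0 η N - avgFlow M0 η' N‖ := norm_nonneg _
      calc |w x| ≤ L * ‖avgFlow M0 η N - avgFlow M0 η' N‖ := h1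
        _ ≤ L₀ * (B * r) := by nlinarith
    constructor
    · -- first estimate
      have key2 : Fmfg c g M0 P η - Fmfg c g M0 P η' - Fmfg c g M0 P' η + Fmfg c g M0 P' η' =
          (∑ k : Fin N, ∑ x, ∑ y,
            (flow M0 P (k : ℕ) x * P x y k - flow M0 P' (k : ℕ) x * P' x y k) * u k x) +
          ∑ x, (flow M0 P N x - flow M0 P' N x) * w x := by
        have e : Fmfg c g M0 P η - Fmfg c g M0 P η' - Fmfg c g M0 P' η + Fmfg c g M0 P' η' =
            (Fmfg c g M0 P η - Fmfg c g M0 P η') -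
              (Fmfg c g M0 P' η - Fmfg c g M0 P' η') := by ring
        rw [e, key P, key P', add_sub_add_comm]
        simp only [← Finset.sum_sub_distrib, ← sub_mul]
      rw [key2]
      have hbound := abs_sum_add_sum_le
        (fun k x y => flow M0 P (k : ℕ) x * P x y k - flow M0 P' (k : ℕ) x * P' x y k)
        u (fun x => flow M0 P N x - flow M0 P' N x) w
        (A := (B + 1) * ‖P - P'‖) (D := L₀ * (B * r))
        (by positivity)
        (fun k x y => by
          beta_reduce
          have e1 : flow M0 P (k : ℕ) x * P x y k - flow M0 P' (k : ℕ) x * P' x y k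
              = (flow M0 P (k : ℕ) x - flow M0 P' (k : ℕ) x) * P x y k
                + flow M0 P' (k : ℕ) x * (P x y k - P' x y k) := by ring
          rw [e1]
          refine (abs_add_le _ _).trans ?_
          rw [abs_mul, abs_mul]
          have h1 : |P x y k| ≤ 1 := by
            rw [abs_of_nonneg ((hP x k).1 y)]
            exact simplex_le_one (hP x k) y
          have h2 : |flow M0 P' (k : ℕ) x| ≤ 1 := flow_abs_le_one M0 hM0 hP' _ x
          have h3 : |P x y k - P' x y k| ≤ ‖P - P'‖ := by
            have := entry_abs_le_norm (P - P') x y k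
            simpa using this
          have h4 := flow_lip M0 hM0 hP hP' (k : ℕ) x
          have hpow : ((Fintype.card S : ℝ) + 1) ^ ((k : ℕ) + 1) ≤ B :=
            pow_le_pow_right₀ hs1 (by omega)
          have hd0 : (0:ℝ) ≤ ‖P - P'‖ := norm_nonneg _
          nlinarith [abs_nonneg (flow M0 P (k : ℕ) x - flow M0 P' (k : ℕ) x),
            abs_nonneg (P x y k - P' x y k), abs_nonneg (flow M0 P' (k : ℕ) x),
            abs_nonneg (P x y k),
            pow_nonneg (by positivity : (0:ℝ) ≤ (Fintype.card S : ℝ) + 1) ((k : ℕ) + 1)])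
        (fun x => by
          beta_reduce
          have h4 := flow_lip M0 hM0 hP hP' N x
          have hd0 : (0:ℝ) ≤ ‖P - P'‖ := norm_nonneg _
          have hpow : ((Fintype.card S : ℝ) + 1) ^ (N + 1) = B := rfl
          nlinarith)
        hub hwb
      refine hbound.trans ?_
      have hdr : (0:ℝ) ≤ ‖P - P'‖ * r := mul_nonneg (norm_nonneg _) hr0
      calc c₀ * ((B + 1) * ‖P - P'‖ * (L₀ * (B * r)))
          = c₀ * ((B + 1) * (L₀ * B)) * (‖P - P'‖ * r) := by ring
        _ ≤ (c₀ * ((B + 1) * (L₀ * B)) + 1) * (‖P - P'‖ * r) := by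
            refine mul_le_mul_of_nonneg_right (by linarith) hdr
        _ = (c₀ * ((B + 1) * (L₀ * B)) + 1) * ‖P - P'‖ * r := by ring
    · -- second estimate
      rw [key P]
      have hbound := abs_sum_add_sum_le
        (fun k x y => flow M0 P (k : ℕ) x * P x y k)
        u (fun x => flow M0 P N x) w
        (A := 1) (D := L₀ * (B * r))
        zero_le_one
        (fun k x y => by
          beta_reduce
          rw [abs_mul]
          have h1 : |P x y k| ≤ 1 := by
            rw [abs_of_nonneg ((hP x k).1 y)]
            exact simplex_le_one (hP x k) y
          have h2 : |flow M0 P (k : ℕ) x| ≤ 1 := flow_abs_le_one M0 hM0 hP _ x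
          nlinarith [abs_nonneg (flow M0 P (k : ℕ) x), abs_nonneg (P x y k)])
        (fun x => flow_abs_le_one M0 hM0 hP N x)
        hub hwb
      refine hbound.trans ?_
      have hEr : (0:ℝ) ≤ c₀ * L₀ * (B * B) * r :=
        mul_nonneg (mul_nonneg (mul_nonneg hc₀0 hL₀0) (mul_nonneg hB0 hB0)) hr0
      rw [← hc₀]
      nlinarith
  -- conclude via the infimum over couplings
  have hprodfst : (η.prod η').map Prod.fst = η := by
    rw [Measure.map_fst_prod]; simp
  have hprodsnd : (η.prod η').map Prod.snd = η' := by
    rw [Measure.map_snd_prod]; simp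
  constructor
  · have := le_mul_W1 (μ := η) (ν := η')
      (Q := |Fmfg c g M0 P η - Fmfg c g M0 P η' - Fmfg c g M0 P' η + Fmfg c g M0 P' η'|)
      (a := (c₀ * ((B + 1) * (L₀ * B)) + 1) * ‖P - P'‖)
      (by positivity) (η.prod η') hprodfst hprodsnd
      (fun γ hg1 hg2 => by
        have h := (master γ hg1 hg2).1
        calc |Fmfg c g M0 P η - Fmfg c g M0 P η' - Fmfg c g M0 P' η + Fmfg c g M0 P' η'|
            ≤ (c₀ * ((B + 1) * (L₀ * B)) + 1) * ‖P - P'‖ * ∫ p, dist p.1 p.2 ∂γ := h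
          _ = (c₀ * ((B + 1) * (L₀ * B)) + 1) * ‖P - P'‖ * ∫ p, dist p.1 p.2 ∂γ := rfl)
    calc |Fmfg c g M0 P η - Fmfg c g M0 P η' - Fmfg c g M0 P' η + Fmfg c g M0 P' η'|
        ≤ (c₀ * ((B + 1) * (L₀ * B)) + 1) * ‖P - P'‖ * W1 η η' := by
          have e : (c₀ * ((B + 1) * (L₀ * B)) + 1) * ‖P - P'‖ * W1 η η'
              = ((c₀ * ((B + 1) * (L₀ * B)) + 1) * ‖P - P'‖) * W1 η η' := by ring
          rw [e]; exact this
      _ = (c₀ * ((B + 1) * (L₀ * B)) + 1) * ‖P - P'‖ * W1 η η' := rfl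
  · exact le_mul_W1 (by positivity) (η.prod η') hprodfst hprodsnd
      (fun γ hg1 hg2 => (master γ hg1 hg2).2)
end
end

section
/- Under assumption (H3), suppose ε_n = O(1/(N^t_n log N^s_n)). Then there exists C > 0, independent of n, such that for every n: (i) sup_{x ∈ S_n, t ∈ T_n} |U_n(x,t)| ≤ C, where (U_n, M_n) is any solution of the entropy-regularized finite MFG system on the grid (S_n, T_n); and (ii) the induced path measure ξ_n satisfies E_{ξ_n}(∫_0^T |γ̇(t)|^q dt) ≤ C, i.e. Δt_n Σ_{k=0}^{N^t_n−1} E_{ξ_n}(|(γ(t_{k+1}) − γ(t_k))/Δt_n|^q) ≤ C. -/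
/-!
Choosing the Dirac mass at the current point in the one-step entropic problem gives
`U(t_k) ≤ U(t_{k+1}) + O(Δt)`, while the entropy of any kernel is at least `-log #S_n`, so
`U(t_k) ≥ min U(t_{k+1}) - O(Δt) - ε_n log #S_n`. Over `N^t_n` steps the errors add up to
`O(T) + ε_n N^t_n log #S_n`. Since `log #S_n ≤ 4d log N^s_n` once `N^s_n ≥ 2`, the hypothesis on
`ε_n` bounds `ε_n N^t_n log #S_n` for all but finitely many `n`, hence for all `n`, and so `U_n`
is bounded uniformly.

For the kinetic energy, testing the dynamic programming equation against the optimal kernel and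
averaging over `M_n(t_k)` makes `∑ₓ M_n(x,t_k) U_n(x,t_k)` telescope, and the coercivity of `ℓ`
turns the telescoped sum into a bound on the expected energy of the steps. That expectation is
`E_{ξ_n} ∫ |γ̇|^q`, since `ξ_n` is the law of the Markov chain with kernels `P̂_n` whose marginals
are `M_n(t_k)`.
-/

open MeasureTheory Filter Topology Set
open scoped ENNReal

noncomputable section

/-! ### Continuous objects -/

/-- The path space `Γ = C([0,T]; ℝ^d)` with the uniform distance. -/
abbrev PathSpace (T : ℝ) (d : ℕ) := C(Set.Icc (0 : ℝ) T, Fin d → ℝ)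

/-- Evaluation of a path at time `t ∈ [0,T]` (times are clamped to `[0,T]`). -/
def ev {T : ℝ} {d : ℕ} (hT : 0 ≤ T) (γ : PathSpace T d) (t : ℝ) : Fin d → ℝ :=
  γ (Set.projIcc 0 T hT t)

/-- `m ∈ P₁(ℝ^d)`: a Borel probability measure with finite first moment. -/
def IsP1 {d : ℕ} (m : Measure (Fin d → ℝ)) : Prop :=
  IsProbabilityMeasure m ∧ (∫⁻ x, ‖x‖₊ ∂m) < ⊤

/-! ### The space/time grids and the associated finite MFG -/

/-- Space step `Δx_n = 1/N^s_n`. -/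
def dxn (Ns : ℕ → ℕ) (n : ℕ) : ℝ := 1 / (Ns n : ℝ)

/-- Time step `Δt_n = T/N^t_n`. -/
def dtn (T : ℝ) (Nt : ℕ → ℕ) (n : ℕ) : ℝ := T / (Nt n : ℝ)

/-- Indices of grid points: `i ∈ ℤ^d` with `|i|_∞ ≤ (N^s_n)²`. -/
def gridIdx (d : ℕ) (Ns : ℕ → ℕ) (n : ℕ) : Finset (Fin d → ℤ) :=
  Finset.Icc (fun _ => -(Ns n : ℤ) ^ 2) fun _ => (Ns n : ℤ) ^ 2

/-- The grid point `x_i = i Δx_n ∈ ℝ^d`. -/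
def gpt (d : ℕ) (Ns : ℕ → ℕ) (n : ℕ) (i : Fin d → ℤ) : Fin d → ℝ :=
  fun j => (i j : ℝ) * dxn Ns n

/-- The simplex of probability vectors indexed by a finite set `A`. -/
def gsimplex {ι : Type*} (A : Finset ι) : Set (ι → ℝ) :=
  {p | (∀ i, 0 ≤ p i) ∧ (∀ i ∉ A, p i = 0) ∧ ∑ i ∈ A, p i = 1}

/-- The (negative) entropy `Σ p log p` (with the convention `0 log 0 = 0`). -/
def entD {ι : Type*} (A : Finset ι) (p : ι → ℝ) : ℝ :=
  ∑ i ∈ A, p i * Real.log (p i)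

/-- The measure on `ℝ^d` induced by masses `M` on the grid points. -/
def discMeas (d : ℕ) (Ns : ℕ → ℕ) (n : ℕ) (M : (Fin d → ℤ) → ℝ) :
    Measure (Fin d → ℝ) :=
  ∑ i ∈ gridIdx d Ns n, ENNReal.ofReal (M i) • Measure.dirac (gpt d Ns n i)

/-- The discretized initial condition `M_{n,0}(x_i) = m₀(E_i^n)`, where `E_i^n` is the
cube of side `Δx_n` centered at `x_i` (a closed ball for the sup norm of `ℝ^d`). -/
def Mzero (d : ℕ) (Ns : ℕ → ℕ) (n : ℕ) (m0 : Measure (Fin d → ℝ)) (i : Fin d → ℤ) : ℝ :=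
  (m0 (Metric.closedBall (gpt d Ns n i) (dxn Ns n / 2))).toReal

/-- The one-step entropy-penalized cost
`p ↦ Σ_j p(j) [Δt_n ℓ((x_j − x_i)/Δt_n) + U(j)] + ε_n E_n(p)`. -/
def stepObj (d : ℕ) (T : ℝ) (Ns Nt : ℕ → ℕ) (n : ℕ) (ℓ : (Fin d → ℝ) → ℝ) (εn : ℝ)
    (U1 : (Fin d → ℤ) → ℝ) (i : Fin d → ℤ) (p : (Fin d → ℤ) → ℝ) : ℝ :=
  (∑ j ∈ gridIdx d Ns n, p j *
      (dtn T Nt n * ℓ ((dtn T Nt n)⁻¹ • (gpt d Ns n j - gpt d Ns n i)) + U1 j)) +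
    εn * entD (gridIdx d Ns n) p

/-- `(U, M, P)` solves the entropy-regularized finite MFG system on the `n`-th grid:
`P(k, i, ·)` is the unique minimizer of the one-step cost, `U` satisfies the dynamic
programming equation, `M` is the induced marginal flow starting from the discretized
initial condition, and `U(N^t_n, ·)` is the terminal cost. -/
def SolvesDiscreteMFG (d : ℕ) (T : ℝ) (Ns Nt : ℕ → ℕ) (eps : ℕ → ℝ)
    (ℓ : (Fin d → ℝ) → ℝ) (f g : (Fin d → ℝ) → Measure (Fin d → ℝ) → ℝ)
    (m0 : Measure (Fin d → ℝ)) (n : ℕ)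
    (U M : ℕ → (Fin d → ℤ) → ℝ) (P : ℕ → (Fin d → ℤ) → (Fin d → ℤ) → ℝ) : Prop :=
  (∀ k < Nt n, ∀ i ∈ gridIdx d Ns n,
    P k i ∈ gsimplex (gridIdx d Ns n) ∧
    (∀ p ∈ gsimplex (gridIdx d Ns n),
      stepObj d T Ns Nt n ℓ (eps n) (U (k + 1)) i (P k i) ≤
        stepObj d T Ns Nt n ℓ (eps n) (U (k + 1)) i p) ∧
    (∀ p ∈ gsimplex (gridIdx d Ns n),
      (∀ p' ∈ gsimplex (gridIdx d Ns n),
        stepObj d T Ns Nt n ℓ (eps n) (U (k + 1)) i p ≤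
          stepObj d T Ns Nt n ℓ (eps n) (U (k + 1)) i p') → p = P k i) ∧
    U k i = stepObj d T Ns Nt n ℓ (eps n) (U (k + 1)) i (P k i) +
      dtn T Nt n * f (gpt d Ns n i) (discMeas d Ns n (M k))) ∧
  (∀ k < Nt n, ∀ j ∈ gridIdx d Ns n,
    M (k + 1) j = ∑ i ∈ gridIdx d Ns n, P k i j * M k i) ∧
  (∀ i ∈ gridIdx d Ns n, M 0 i = Mzero d Ns n m0 i) ∧
  (∀ i ∈ gridIdx d Ns n, U (Nt n) i = g (gpt d Ns n i) (discMeas d Ns n (M (Nt n)))) ∧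
  (∀ k ≤ Nt n, M k ∈ gsimplex (gridIdx d Ns n))

/-- The weight of the discrete trajectory `s` under the kernel `P` with discretized
initial distribution: `M_{n,0}(s_0) Π_k P(s_k, s_{k+1}, t_k)`. -/
def pathWeight (d : ℕ) (Ns Nt : ℕ → ℕ) (n : ℕ) (m0 : Measure (Fin d → ℝ))
    (P : ℕ → (Fin d → ℤ) → (Fin d → ℤ) → ℝ)
    (s : Fin (Nt n + 1) → Fin d → ℤ) : ℝ :=
  Mzero d Ns n m0 (s 0) * ∏ k : Fin (Nt n), P (k : ℕ) (s k.castSucc) (s k.succ)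

/-- The probability measure `ξ_n` on `Γ` induced by the discrete MFG solution: the sum
over discrete trajectories of their weights times the Dirac mass at the corresponding
piecewise affine path `interp s`. -/
def xiMeas (d : ℕ) (T : ℝ) [MeasurableSpace (PathSpace T d)] (Ns Nt : ℕ → ℕ)
    (m0 : Measure (Fin d → ℝ)) (n : ℕ)
    (P : ℕ → (Fin d → ℤ) → (Fin d → ℤ) → ℝ)
    (interp : (Fin (Nt n + 1) → Fin d → ℤ) → PathSpace T d) : Measure (PathSpace T d) :=
  ∑ s ∈ Fintype.piFinset (fun _ : Fin (Nt n + 1) => gridIdx d Ns n),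
    ENNReal.ofReal (pathWeight d Ns Nt n m0 P s) • Measure.dirac (interp s)

section Simplex

variable {ι : Type*} {A : Finset ι} {p w : ι → ℝ} {m : ℝ}

lemma le_sum_mul_of_mem_gsimplex (hp : p ∈ gsimplex A) (hw : ∀ j ∈ A, m ≤ w j) :
    m ≤ ∑ j ∈ A, p j * w j :=
  calc m = ∑ j ∈ A, p j * m := by rw [← Finset.sum_mul, hp.2.2, one_mul]
    _ ≤ ∑ j ∈ A, p j * w j :=
      Finset.sum_le_sum fun j hj => mul_le_mul_of_nonneg_left (hw j hj) (hp.1 j)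

lemma sum_mul_le_of_mem_gsimplex (hp : p ∈ gsimplex A) (hw : ∀ j ∈ A, w j ≤ m) :
    ∑ j ∈ A, p j * w j ≤ m :=
  calc ∑ j ∈ A, p j * w j ≤ ∑ j ∈ A, p j * m :=
      Finset.sum_le_sum fun j hj => mul_le_mul_of_nonneg_left (hw j hj) (hp.1 j)
    _ = m := by rw [← Finset.sum_mul, hp.2.2, one_mul]

lemma abs_sum_mul_le_of_mem_gsimplex (hp : p ∈ gsimplex A) (hw : ∀ j ∈ A, |w j| ≤ m) :
    |∑ j ∈ A, p j * w j| ≤ m :=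
  abs_le.2 ⟨le_sum_mul_of_mem_gsimplex hp fun j hj => (abs_le.1 (hw j hj)).1,
    sum_mul_le_of_mem_gsimplex hp fun j hj => (abs_le.1 (hw j hj)).2⟩

lemma neg_log_card_le_entD (hp : p ∈ gsimplex A) : -Real.log A.card ≤ entD A p := by
  obtain ⟨hp0, -, hp1⟩ := hp
  have hA : A.Nonempty := Finset.nonempty_of_sum_ne_zero (by rw [hp1]; exact one_ne_zero)
  have hc : (0 : ℝ) < A.card := by exact_mod_cast hA.card_pos
  have hjensen := Real.convexOn_mul_log.map_sum_le (t := A) (w := fun _ => (A.card : ℝ)⁻¹)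
    (p := p) (fun _ _ => by positivity) (by simp [hc.ne']) (fun i _ => hp0 i)
  simp only [smul_eq_mul, ← Finset.mul_sum, hp1, mul_one, Real.log_inv] at hjensen
  exact le_of_mul_le_mul_left hjensen (inv_pos.2 hc)

lemma single_mem_gsimplex [DecidableEq ι] {i : ι} (hi : i ∈ A) :
    Pi.single i 1 ∈ gsimplex A :=
  ⟨fun j => by by_cases h : j = i <;> simp [h],
    fun j hj => Pi.single_eq_of_ne (ne_of_mem_of_not_mem hi hj).symm 1,
    by simp [Finset.sum_pi_single', hi]⟩

lemma entropic_cost_le_of_isMin [DecidableEq ι] {ε : ℝ} {i : ι} (hi : i ∈ A)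
    (hmin : ∀ p' ∈ gsimplex A,
      ∑ j ∈ A, p j * w j + ε * entD A p ≤ ∑ j ∈ A, p' j * w j + ε * entD A p') :
    ∑ j ∈ A, p j * w j + ε * entD A p ≤ w i := by
  have hsingle := hmin _ (single_mem_gsimplex hi)
  have hent : entD A (Pi.single i 1) = 0 :=
    Finset.sum_eq_zero fun j _ => by by_cases h : j = i <;> simp [h]
  have hsum : ∑ j ∈ A, (Pi.single i 1 : ι → ℝ) j * w j = w i := by
    simp [Pi.single_apply, hi]
  rwa [hent, hsum, mul_zero, add_zero] at hsingle

lemma le_entropic_cost {ε : ℝ} (hp : p ∈ gsimplex A) (hε : 0 ≤ ε) (hw : ∀ j ∈ A, m ≤ w j) :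
    m - ε * Real.log A.card ≤ ∑ j ∈ A, p j * w j + ε * entD A p := by
  have := mul_le_mul_of_nonneg_left (neg_log_card_le_entD hp) hε
  linarith [le_sum_mul_of_mem_gsimplex hp hw]

end Simplex

lemma abs_le_of_backward_step {ι : Type*} {A : Finset ι} {V : ℕ → ι → ℝ} {N : ℕ} {B b : ℝ}
    (hb : 0 ≤ b) (hN : ∀ i ∈ A, |V N i| ≤ B)
    (hstep : ∀ k < N, ∀ B', (∀ j ∈ A, |V (k + 1) j| ≤ B') → ∀ i ∈ A, |V k i| ≤ B' + b) :
    ∀ k ≤ N, ∀ i ∈ A, |V k i| ≤ B + N * b := by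
  suffices h : ∀ j ≤ N, ∀ i ∈ A, |V (N - j) i| ≤ B + j * b by
    intro k hk i hi
    have hsub := h (N - k) (Nat.sub_le N k) i hi
    rw [Nat.sub_sub_self hk] at hsub
    refine hsub.trans ?_
    gcongr
    exact_mod_cast Nat.sub_le N k
  intro j
  induction j with
  | zero => simpa using hN
  | succ j ih =>
    intro hj i hi
    have hk : N - (j + 1) + 1 = N - j := by omega
    have := hstep (N - (j + 1)) (by omega) _ (hk ▸ ih (by omega)) i hi
    push_cast
    linarith

section MarkovChain

variable {ι : Type*} {A : Finset ι}

lemma sum_mul_sum_kernel {Q : ι → ι → ℝ} {μ μ' h : ι → ℝ}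
    (hμ' : ∀ j ∈ A, μ' j = ∑ i ∈ A, Q i j * μ i) :
    ∑ i ∈ A, μ i * ∑ j ∈ A, Q i j * h j = ∑ j ∈ A, μ' j * h j := by
  simp_rw [Finset.mul_sum]
  rw [Finset.sum_comm]
  refine Finset.sum_congr rfl fun j hj => ?_
  rw [hμ' j hj, Finset.sum_mul]
  exact Finset.sum_congr rfl fun i _ => by ring

lemma sum_piFinset_snoc {β : Type*} [AddCommMonoid β] (N : ℕ) (F : (Fin (N + 1) → ι) → β) :
    ∑ s ∈ Fintype.piFinset (fun _ : Fin (N + 1) => A), F s =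
      ∑ t ∈ Fintype.piFinset (fun _ : Fin N => A), ∑ y ∈ A, F (Fin.snoc t y) := by
  classical
  have h := Finset.filter_piFinset_eq_map_snocEquiv (fun _ : Fin (N + 1) => A) (fun _ => True)
  simp only [Finset.filter_true] at h
  rw [h, Finset.sum_map, Finset.sum_product_right]
  rfl

def chainWeight {N : ℕ} (ν : ι → ℝ) (Q : ℕ → ι → ι → ℝ) (s : Fin (N + 1) → ι) : ℝ :=
  ν (s 0) * ∏ k : Fin N, Q k (s k.castSucc) (s k.succ)

lemma chainWeight_snoc {N : ℕ} (ν : ι → ℝ) (Q : ℕ → ι → ι → ℝ) (t : Fin (N + 1) → ι) (y : ι) :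
    chainWeight ν Q (Fin.snoc t y : Fin (N + 2) → ι) =
      chainWeight ν Q t * Q N (t (Fin.last N)) y := by
  rw [chainWeight, chainWeight, Fin.prod_univ_castSucc]
  simp only [Fin.succ_castSucc, Fin.snoc_castSucc, Fin.succ_last, Fin.snoc_last, Fin.val_castSucc,
    Fin.val_last]
  rw [← Fin.castSucc_zero, Fin.snoc_castSucc, mul_assoc]

lemma chainWeight_nonneg {N : ℕ} {ν : ι → ℝ} {Q : ℕ → ι → ι → ℝ} {s : Fin (N + 1) → ι}
    (hs : s ∈ Fintype.piFinset (fun _ : Fin (N + 1) => A)) (hν : ∀ i ∈ A, 0 ≤ ν i)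
    (hQ : ∀ k < N, ∀ i ∈ A, ∀ j, 0 ≤ Q k i j) : 0 ≤ chainWeight ν Q s :=
  mul_nonneg (hν _ (Fintype.mem_piFinset.1 hs 0)) (Finset.prod_nonneg fun k _ =>
    hQ k k.isLt _ (Fintype.mem_piFinset.1 hs _) _)

variable {ν : ι → ℝ} {Q : ℕ → ι → ι → ℝ} {μ : ℕ → ι → ℝ}

lemma sum_chainWeight_mul_last {N : ℕ} (hμ0 : ∀ i ∈ A, μ 0 i = ν i)
    (hμ : ∀ k < N, ∀ j ∈ A, μ (k + 1) j = ∑ i ∈ A, Q k i j * μ k i) (h : ι → ℝ) :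
    ∑ s ∈ Fintype.piFinset (fun _ : Fin (N + 1) => A), chainWeight ν Q s * h (s (Fin.last N)) =
      ∑ i ∈ A, μ N i * h i := by
  induction N generalizing h with
  | zero =>
    rw [sum_piFinset_snoc]
    simp only [Fintype.piFinset_of_isEmpty, Finset.univ_unique, Finset.sum_singleton]
    exact Finset.sum_congr rfl fun i hi => by simp [chainWeight, Fin.snoc, hμ0 i hi]
  | succ N ih =>
    calc _ = ∑ t ∈ Fintype.piFinset (fun _ : Fin (N + 1) => A),
          chainWeight ν Q t * ∑ y ∈ A, Q N (t (Fin.last N)) y * h y := by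
          rw [sum_piFinset_snoc]
          refine Finset.sum_congr rfl fun t _ => ?_
          simp only [chainWeight_snoc, Fin.snoc_last, Finset.mul_sum, mul_assoc]
      _ = ∑ i ∈ A, μ N i * ∑ y ∈ A, Q N i y * h y :=
          ih (fun k hk => hμ k (by omega)) (fun i => ∑ y ∈ A, Q N i y * h y)
      _ = ∑ i ∈ A, μ (N + 1) i * h i := sum_mul_sum_kernel (hμ N (by omega))

lemma sum_chainWeight_mul_sum {N : ℕ} (hμ0 : ∀ i ∈ A, μ 0 i = ν i)
    (hμ : ∀ k < N, ∀ j ∈ A, μ (k + 1) j = ∑ i ∈ A, Q k i j * μ k i)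
    (hQ : ∀ k < N, ∀ i ∈ A, ∑ j ∈ A, Q k i j = 1) (c : ℕ → ι → ι → ℝ) :
    ∑ s ∈ Fintype.piFinset (fun _ : Fin (N + 1) => A),
        chainWeight ν Q s * ∑ k : Fin N, c k (s k.castSucc) (s k.succ) =
      ∑ k ∈ Finset.range N, ∑ i ∈ A, μ k i * ∑ j ∈ A, Q k i j * c k i j := by
  induction N with
  | zero => simp
  | succ N ih =>
    have hsplit : ∀ t ∈ Fintype.piFinset (fun _ : Fin (N + 1) => A),
        ∑ y ∈ A, chainWeight ν Q (Fin.snoc t y : Fin (N + 2) → ι) *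
            ∑ k : Fin (N + 1), c k ((Fin.snoc t y : Fin (N + 2) → ι) k.castSucc)
              ((Fin.snoc t y : Fin (N + 2) → ι) k.succ) =
          chainWeight ν Q t * ∑ k : Fin N, c k (t k.castSucc) (t k.succ) +
            chainWeight ν Q t * ∑ y ∈ A, Q N (t (Fin.last N)) y * c N (t (Fin.last N)) y := by
      intro t ht
      have hrow := hQ N (by omega) _ (Fintype.mem_piFinset.1 ht (Fin.last N))
      simp only [chainWeight_snoc, Fin.sum_univ_castSucc, Fin.succ_castSucc, Fin.snoc_castSucc,
        Fin.succ_last, Fin.snoc_last, Fin.val_castSucc, Fin.val_last]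
      simp only [mul_add, Finset.sum_add_distrib, ← Finset.sum_mul, ← Finset.mul_sum, hrow,
        mul_assoc]
      ring
    rw [sum_piFinset_snoc, Finset.sum_congr rfl hsplit, Finset.sum_add_distrib,
      ih (fun k hk => hμ k (by omega)) (fun k hk => hQ k (by omega)),
      sum_chainWeight_mul_last hμ0 (fun k hk => hμ k (by omega))
        (fun i => ∑ j ∈ A, Q N i j * c N i j), Finset.sum_range_succ]

end MarkovChain

lemma integral_sum_smul_dirac {α β : Type*} [MeasurableSpace α] [MeasurableSingletonClass α]
    (s : Finset β) {w : β → ℝ} (hw : ∀ b ∈ s, 0 ≤ w b) (x : β → α) (F : α → ℝ) :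
    ∫ a, F a ∂(∑ b ∈ s, ENNReal.ofReal (w b) • Measure.dirac (x b)) =
      ∑ b ∈ s, w b * F (x b) := by
  rw [integral_finsetSum_measure fun b _ =>
    (integrable_dirac enorm_lt_top).smul_measure ENNReal.ofReal_ne_top]
  refine Finset.sum_congr rfl fun b hb => ?_
  rw [integral_smul_measure, integral_dirac, ENNReal.toReal_ofReal (hw b hb), smul_eq_mul]

lemma sub_eq_of_eq_affine {E : Type*} [AddCommGroup E] [Module ℝ E] {φ : ℝ → E}
    {t₀ t₁ Δ : ℝ} {a b : E} (ht : t₀ ≤ t₁) (hΔ : t₁ - t₀ = Δ) (hΔ0 : Δ ≠ 0)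
    (hφ : ∀ t ∈ Set.Icc t₀ t₁, φ t = a + ((t - t₀) / Δ) • (b - a)) :
    φ t₁ - φ t₀ = b - a := by
  rw [hφ t₁ ⟨ht, le_rfl⟩, hφ t₀ ⟨le_rfl, ht⟩, hΔ, div_self hΔ0, sub_self, zero_div, one_smul,
    zero_smul]
  abel

lemma isP1_discMeas {d : ℕ} {Ns : ℕ → ℕ} {n : ℕ} {μ : (Fin d → ℤ) → ℝ}
    (hμ : μ ∈ gsimplex (gridIdx d Ns n)) : IsP1 (discMeas d Ns n μ) := by
  obtain ⟨hμ0, -, hμ1⟩ := hμ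
  refine ⟨⟨?_⟩, ?_⟩
  · simp only [discMeas, Measure.coe_finsetSum, Finset.sum_apply, Measure.smul_apply,
      measure_univ, smul_eq_mul, mul_one]
    rw [← ENNReal.ofReal_sum_of_nonneg fun i _ => hμ0 i, hμ1, ENNReal.ofReal_one]
  · rw [discMeas, lintegral_finsetSum_measure]
    refine ENNReal.sum_lt_top.2 fun i _ => ?_
    rw [lintegral_smul_measure, lintegral_dirac]
    exact ENNReal.mul_lt_top ENNReal.ofReal_lt_top ENNReal.coe_lt_top

lemma card_gridIdx (d : ℕ) (Ns : ℕ → ℕ) (n : ℕ) :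
    (gridIdx d Ns n).card = (2 * Ns n ^ 2 + 1) ^ d := by
  have hlen : ((Ns n : ℤ) ^ 2 + 1 + (Ns n : ℤ) ^ 2).toNat = 2 * Ns n ^ 2 + 1 := by
    rw [show (Ns n : ℤ) ^ 2 + 1 + (Ns n : ℤ) ^ 2 = ((2 * Ns n ^ 2 + 1 : ℕ) : ℤ) by push_cast; ring]
    exact Int.toNat_natCast _
  simp [gridIdx, Pi.card_Icc, Int.card_Icc, hlen]

lemma log_card_gridIdx_le {d : ℕ} {Ns : ℕ → ℕ} {n : ℕ} (hNs : 2 ≤ (Ns n : ℝ)) :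
    Real.log (gridIdx d Ns n).card ≤ 4 * d * Real.log (Ns n) := by
  have hbase : ((2 * Ns n ^ 2 + 1 : ℕ) : ℝ) ≤ (Ns n : ℝ) ^ 4 := by
    push_cast
    nlinarith [sq_nonneg ((Ns n : ℝ) ^ 2 - 2)]
  calc Real.log (gridIdx d Ns n).card = d * Real.log ((2 * Ns n ^ 2 + 1 : ℕ) : ℝ) := by
        rw [card_gridIdx, Nat.cast_pow, Real.log_pow]
    _ ≤ d * Real.log ((Ns n : ℝ) ^ 4) := by gcongr
    _ = 4 * d * Real.log (Ns n) := by rw [Real.log_pow]; push_cast; ring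

lemma exists_eps_mul_log_card_gridIdx_le {d : ℕ} {Ns Nt : ℕ → ℕ} {eps : ℕ → ℝ}
    (heps : ∀ n, 0 ≤ eps n) (hNs : Tendsto (fun n => (Ns n : ℝ)) atTop atTop)
    (hepsO : ∃ K : ℝ, ∀ n, eps n * ((Nt n : ℝ) * Real.log (Ns n)) ≤ K) :
    ∃ R ≥ 0, ∀ n, eps n * ((Nt n : ℝ) * Real.log (gridIdx d Ns n).card) ≤ R := by
  obtain ⟨K, hK⟩ := hepsO
  have hev : ∀ᶠ n in atTop,
      eps n * ((Nt n : ℝ) * Real.log (gridIdx d Ns n).card) ≤ 4 * d * K := by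
    filter_upwards [hNs.eventually_ge_atTop 2] with n hn
    calc eps n * ((Nt n : ℝ) * Real.log (gridIdx d Ns n).card)
        ≤ eps n * ((Nt n : ℝ) * (4 * d * Real.log (Ns n))) := by
          gcongr
          exacts [heps n, log_card_gridIdx_le hn]
      _ = 4 * d * (eps n * ((Nt n : ℝ) * Real.log (Ns n))) := by ring
      _ ≤ 4 * d * K := by gcongr; exact hK n
  obtain ⟨R, hR⟩ := (isBoundedUnder_of_eventually_le hev).bddAbove_range
  exact ⟨max R 0, le_max_right _ _, fun n => (hR ⟨n, rfl⟩).trans (le_max_left _ _)⟩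

lemma dtn_nonneg {T : ℝ} (hT : 0 ≤ T) (Nt : ℕ → ℕ) (n : ℕ) : 0 ≤ dtn T Nt n :=
  div_nonneg hT (Nat.cast_nonneg _)

lemma natCast_mul_dtn (T : ℝ) {Nt : ℕ → ℕ} {n : ℕ} (hNt : 0 < Nt n) :
    (Nt n : ℝ) * dtn T Nt n = T :=
  mul_div_cancel₀ T (by exact_mod_cast hNt.ne')

def stepEnergy (d : ℕ) (T : ℝ) (Ns Nt : ℕ → ℕ) (n : ℕ) (q : ℝ) (i j : Fin d → ℤ) : ℝ :=
  dtn T Nt n * ‖(dtn T Nt n)⁻¹ • (gpt d Ns n j - gpt d Ns n i)‖ ^ q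

namespace SolvesDiscreteMFG

variable {d : ℕ} {T : ℝ} {Ns Nt : ℕ → ℕ} {eps : ℕ → ℝ} {ℓ : (Fin d → ℝ) → ℝ}
  {f g : (Fin d → ℝ) → Measure (Fin d → ℝ) → ℝ} {m0 : Measure (Fin d → ℝ)} {n : ℕ}
  {U M : ℕ → (Fin d → ℤ) → ℝ} {P : ℕ → (Fin d → ℤ) → (Fin d → ℤ) → ℝ} {Cℓ Cb : ℝ}

lemma abs_value_le_of_succ (hsol : SolvesDiscreteMFG d T Ns Nt eps ℓ f g m0 n U M P)
    (hε : 0 ≤ eps n) (hΔ : 0 ≤ dtn T Nt n) (hℓ : ∀ α, -Cℓ ≤ ℓ α) (hℓ0 : ℓ 0 ≤ Cℓ)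
    (hf : ∀ m, IsP1 m → ∀ x, |f x m| ≤ Cb) {k : ℕ} (hk : k < Nt n) {B : ℝ}
    (hB : ∀ j ∈ gridIdx d Ns n, |U (k + 1) j| ≤ B) {i : Fin d → ℤ} (hi : i ∈ gridIdx d Ns n) :
    |U k i| ≤ B + (dtn T Nt n * (Cℓ + Cb) + eps n * Real.log (gridIdx d Ns n).card) := by
  classical
  obtain ⟨hPk, hmin, -, hUk⟩ := hsol.1 k hk i hi
  have hfk := abs_le.1 (hf _ (isP1_discMeas (hsol.2.2.2.2 k hk.le)) (gpt d Ns n i))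
  have hupper := entropic_cost_le_of_isMin hi hmin
  have hlower := le_entropic_cost hPk hε (m := -(dtn T Nt n * Cℓ) - B)
    (w := fun j => dtn T Nt n * ℓ ((dtn T Nt n)⁻¹ • (gpt d Ns n j - gpt d Ns n i)) + U (k + 1) j)
    fun j hj => by
      have := mul_le_mul_of_nonneg_left (hℓ ((dtn T Nt n)⁻¹ • (gpt d Ns n j - gpt d Ns n i))) hΔ
      linarith [(abs_le.1 (hB j hj)).1]
  rw [sub_self, smul_zero] at hupper
  rw [stepObj] at hUk
  have hℓ0Δ := mul_le_mul_of_nonneg_left hℓ0 hΔ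
  have hfΔ := And.intro (mul_le_mul_of_nonneg_left hfk.1 hΔ) (mul_le_mul_of_nonneg_left hfk.2 hΔ)
  have hεL := mul_nonneg hε (Real.log_natCast_nonneg (gridIdx d Ns n).card)
  rw [abs_le]
  constructor <;> linarith [(abs_le.1 (hB i hi)).2, hfΔ.1, hfΔ.2]

lemma abs_value_le (hsol : SolvesDiscreteMFG d T Ns Nt eps ℓ f g m0 n U M P) (hT : 0 ≤ T)
    (hNt : 0 < Nt n) (hε : 0 ≤ eps n) (hCb : 0 ≤ Cb) (hℓ : ∀ α, -Cℓ ≤ ℓ α) (hℓ0 : ℓ 0 ≤ Cℓ)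
    (hfg : ∀ m, IsP1 m → ∀ x, |f x m| ≤ Cb ∧ |g x m| ≤ Cb) {k : ℕ} (hk : k ≤ Nt n)
    {i : Fin d → ℤ} (hi : i ∈ gridIdx d Ns n) :
    |U k i| ≤ Cb + T * (Cℓ + Cb) + eps n * ((Nt n : ℝ) * Real.log (gridIdx d Ns n).card) := by
  have hΔ := dtn_nonneg hT Nt n
  have hstep : 0 ≤ dtn T Nt n * (Cℓ + Cb) + eps n * Real.log (gridIdx d Ns n).card := by
    have := mul_nonneg hε (Real.log_natCast_nonneg (gridIdx d Ns n).card)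
    nlinarith [hℓ 0]
  have hterminal : ∀ j ∈ gridIdx d Ns n, |U (Nt n) j| ≤ Cb := fun j hj => by
    rw [hsol.2.2.2.1 j hj]
    exact (hfg _ (isP1_discMeas (hsol.2.2.2.2 _ le_rfl)) _).2
  have := abs_le_of_backward_step hstep hterminal
    (fun k hk B hB i hi => hsol.abs_value_le_of_succ hε hΔ hℓ hℓ0 (fun m hm x => (hfg m hm x).1)
      hk hB hi) k hk i hi
  rw [mul_add, ← mul_assoc, natCast_mul_dtn T hNt] at this
  linarith

lemma energy_row_le (hsol : SolvesDiscreteMFG d T Ns Nt eps ℓ f g m0 n U M P)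
    (hε : 0 ≤ eps n) (hΔ : 0 ≤ dtn T Nt n) {lo q : ℝ} (hℓ : ∀ α, lo * ‖α‖ ^ q - Cℓ ≤ ℓ α)
    (hf : ∀ m, IsP1 m → ∀ x, |f x m| ≤ Cb) {k : ℕ} (hk : k < Nt n) {i : Fin d → ℤ}
    (hi : i ∈ gridIdx d Ns n) :
    lo * ∑ j ∈ gridIdx d Ns n, P k i j * stepEnergy d T Ns Nt n q i j ≤
      U k i - ∑ j ∈ gridIdx d Ns n, P k i j * U (k + 1) j +
        (dtn T Nt n * (Cℓ + Cb) + eps n * Real.log (gridIdx d Ns n).card) := by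
  obtain ⟨hPk, -, -, hUk⟩ := hsol.1 k hk i hi
  have hfk := (abs_le.1 (hf _ (isP1_discMeas (hsol.2.2.2.2 k hk.le)) (gpt d Ns n i))).1
  have hent := mul_le_mul_of_nonneg_left (neg_log_card_le_entD hPk) hε
  have hgrowth : ∑ j ∈ gridIdx d Ns n, P k i j * (lo * stepEnergy d T Ns Nt n q i j) ≤
      ∑ j ∈ gridIdx d Ns n, P k i j *
        (dtn T Nt n * ℓ ((dtn T Nt n)⁻¹ • (gpt d Ns n j - gpt d Ns n i)) + dtn T Nt n * Cℓ) :=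
    Finset.sum_le_sum fun j _ => mul_le_mul_of_nonneg_left (by
      have := mul_le_mul_of_nonneg_left (hℓ ((dtn T Nt n)⁻¹ • (gpt d Ns n j - gpt d Ns n i))) hΔ
      rw [stepEnergy]
      linarith) (hPk.1 j)
  rw [Finset.mul_sum]
  simp only [mul_add, Finset.sum_add_distrib, ← Finset.sum_mul, hPk.2.2, one_mul,
    mul_left_comm _ lo] at hgrowth
  rw [stepObj] at hUk
  simp only [mul_add, Finset.sum_add_distrib] at hUk
  have := mul_le_mul_of_nonneg_left hfk hΔ
  linarith

lemma energy_sum_le (hsol : SolvesDiscreteMFG d T Ns Nt eps ℓ f g m0 n U M P) (hT : 0 ≤ T)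
    (hNt : 0 < Nt n) (hε : 0 ≤ eps n) {lo q : ℝ} (hℓ : ∀ α, lo * ‖α‖ ^ q - Cℓ ≤ ℓ α)
    (hf : ∀ m, IsP1 m → ∀ x, |f x m| ≤ Cb) {B : ℝ}
    (hU : ∀ k ≤ Nt n, ∀ i ∈ gridIdx d Ns n, |U k i| ≤ B) :
    lo * ∑ k ∈ Finset.range (Nt n), ∑ i ∈ gridIdx d Ns n,
        M k i * ∑ j ∈ gridIdx d Ns n, P k i j * stepEnergy d T Ns Nt n q i j ≤
      2 * B + T * (Cℓ + Cb) + eps n * ((Nt n : ℝ) * Real.log (gridIdx d Ns n).card) := by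
  set c := dtn T Nt n * (Cℓ + Cb) + eps n * Real.log (gridIdx d Ns n).card
  set S : ℕ → ℝ := fun k => ∑ i ∈ gridIdx d Ns n, M k i * U k i
  have hS : ∀ k ≤ Nt n, |S k| ≤ B := fun k hk =>
    abs_sum_mul_le_of_mem_gsimplex (hsol.2.2.2.2 k hk) (hU k hk)
  have hstep : ∀ k ∈ Finset.range (Nt n), lo * ∑ i ∈ gridIdx d Ns n,
      M k i * ∑ j ∈ gridIdx d Ns n, P k i j * stepEnergy d T Ns Nt n q i j ≤
        S k - S (k + 1) + c := by
    intro k hk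
    rw [Finset.mem_range] at hk
    obtain ⟨hM0, -, hM1⟩ := hsol.2.2.2.2 k hk.le
    calc lo * ∑ i ∈ gridIdx d Ns n,
          M k i * ∑ j ∈ gridIdx d Ns n, P k i j * stepEnergy d T Ns Nt n q i j
        = ∑ i ∈ gridIdx d Ns n,
            M k i * (lo * ∑ j ∈ gridIdx d Ns n, P k i j * stepEnergy d T Ns Nt n q i j) := by
          rw [Finset.mul_sum]
          exact Finset.sum_congr rfl fun _ _ => mul_left_comm _ _ _
      _ ≤ ∑ i ∈ gridIdx d Ns n,
            M k i * (U k i - ∑ j ∈ gridIdx d Ns n, P k i j * U (k + 1) j + c) :=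
          Finset.sum_le_sum fun i hi => mul_le_mul_of_nonneg_left
            (hsol.energy_row_le hε (dtn_nonneg hT Nt n) hℓ hf hk hi) (hM0 i)
      _ = S k - S (k + 1) + c := by
          simp only [mul_add, mul_sub, Finset.sum_add_distrib, Finset.sum_sub_distrib,
            ← Finset.sum_mul, hM1, one_mul, sum_mul_sum_kernel (hsol.2.1 k hk), S]
  have hNc : (Nt n : ℝ) * c =
      T * (Cℓ + Cb) + eps n * ((Nt n : ℝ) * Real.log (gridIdx d Ns n).card) := by
    rw [← natCast_mul_dtn T hNt]
    ring
  calc _ ≤ ∑ k ∈ Finset.range (Nt n), (S k - S (k + 1) + c) := by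
        rw [Finset.mul_sum]
        exact Finset.sum_le_sum hstep
    _ = S 0 - S (Nt n) + (Nt n : ℝ) * c := by
        rw [Finset.sum_add_distrib, Finset.sum_range_sub', Finset.sum_const, Finset.card_range,
          nsmul_eq_mul]
    _ ≤ _ := by
        rw [hNc]
        linarith [(abs_le.1 (hS 0 (Nat.zero_le _))).2, (abs_le.1 (hS (Nt n) le_rfl)).1]

lemma integral_energy_eq [MeasurableSpace (PathSpace T d)] [BorelSpace (PathSpace T d)]
    (hsol : SolvesDiscreteMFG d T Ns Nt eps ℓ f g m0 n U M P) (hT : 0 < T) (hNt : 0 < Nt n)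
    (q : ℝ) (interp : (Fin (Nt n + 1) → Fin d → ℤ) → PathSpace T d)
    (hinterp : ∀ s : Fin (Nt n + 1) → Fin d → ℤ, ∀ k : Fin (Nt n), ∀ t : ℝ,
      t ∈ Set.Icc (((k : ℕ) : ℝ) * dtn T Nt n) ((((k : ℕ) : ℝ) + 1) * dtn T Nt n) →
      ev hT.le (interp s) t = gpt d Ns n (s k.castSucc) +
        ((t - ((k : ℕ) : ℝ) * dtn T Nt n) / dtn T Nt n) •
          (gpt d Ns n (s k.succ) - gpt d Ns n (s k.castSucc))) :
    ∫ γ, (∑ k : Fin (Nt n), dtn T Nt n *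
        ‖(dtn T Nt n)⁻¹ • (ev hT.le γ ((((k : ℕ) : ℝ) + 1) * dtn T Nt n) -
          ev hT.le γ (((k : ℕ) : ℝ) * dtn T Nt n))‖ ^ q) ∂(xiMeas d T Ns Nt m0 n P interp) =
      ∑ k ∈ Finset.range (Nt n), ∑ i ∈ gridIdx d Ns n,
        M k i * ∑ j ∈ gridIdx d Ns n, P k i j * stepEnergy d T Ns Nt n q i j := by
  have hΔ : 0 < dtn T Nt n := div_pos hT (by exact_mod_cast hNt)
  have hweight : ∀ s ∈ Fintype.piFinset (fun _ : Fin (Nt n + 1) => gridIdx d Ns n),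
      0 ≤ pathWeight d Ns Nt n m0 P s := fun s hs =>
    chainWeight_nonneg hs (fun _ _ => ENNReal.toReal_nonneg) fun k hk i hi =>
      (hsol.1 k hk i hi).1.1
  have hpath : ∀ (s : Fin (Nt n + 1) → Fin d → ℤ) (k : Fin (Nt n)),
      ev hT.le (interp s) ((((k : ℕ) : ℝ) + 1) * dtn T Nt n) -
          ev hT.le (interp s) (((k : ℕ) : ℝ) * dtn T Nt n) =
        gpt d Ns n (s k.succ) - gpt d Ns n (s k.castSucc) := fun s k =>
    sub_eq_of_eq_affine (φ := fun t => ev hT.le (interp s) t) (by nlinarith) (by ring) hΔ.ne'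
      (hinterp s k)
  rw [xiMeas, integral_sum_smul_dirac _ hweight]
  simp only [hpath]
  exact sum_chainWeight_mul_sum hsol.2.2.1 hsol.2.1 (fun k hk i hi => (hsol.1 k hk i hi).1.2.2)
    fun _ i j => stepEnergy d T Ns Nt n q i j

end SolvesDiscreteMFG

theorem discrete_mfg_uniform_bounds_general
    (d : ℕ) (T : ℝ) (hT : 0 < T) (q : ℝ) (hq : 1 < q)
    [MeasurableSpace (PathSpace T d)] [BorelSpace (PathSpace T d)]
    -- (H3)(i)
    (ℓ : (Fin d → ℝ) → ℝ)
    (lo hi Cℓ : ℝ) (hlo : 0 < lo) (hCℓ : 0 < Cℓ)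
    (hgrowth : ∀ α : Fin d → ℝ, lo * ‖α‖ ^ q - Cℓ ≤ ℓ α ∧ ℓ α ≤ hi * ‖α‖ ^ q + Cℓ)
    -- (H3)(ii)
    (f g : (Fin d → ℝ) → Measure (Fin d → ℝ) → ℝ)
    (Cb : ℝ) (hCb : 0 < Cb)
    (hbound : ∀ m, IsP1 m → ∀ x, |f x m| ≤ Cb ∧ |g x m| ≤ Cb)
    -- (H3)(iii)
    (m0 : Measure (Fin d → ℝ))
    -- the grids
    (Ns Nt : ℕ → ℕ) (hNt : ∀ n, 0 < Nt n)
    (hNsInfty : Tendsto (fun n => (Ns n : ℝ)) atTop atTop)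
    (eps : ℕ → ℝ) (heps : ∀ n, 0 < eps n)
    -- ε_n = O(1/(N^t_n log N^s_n))
    (hepsO : ∃ Kb : ℝ, ∀ n, eps n * ((Nt n : ℝ) * Real.log (Ns n)) ≤ Kb)
    -- the solutions of the finite MFGs and the induced path measures
    (U M : ℕ → ℕ → (Fin d → ℤ) → ℝ)
    (P : ℕ → ℕ → (Fin d → ℤ) → (Fin d → ℤ) → ℝ)
    (hsol : ∀ n, SolvesDiscreteMFG d T Ns Nt eps ℓ f g m0 n (U n) (M n) (P n))
    (interp : (n : ℕ) → (Fin (Nt n + 1) → Fin d → ℤ) → PathSpace T d)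
    (hinterp : ∀ n, ∀ s : Fin (Nt n + 1) → Fin d → ℤ, ∀ k : Fin (Nt n), ∀ t : ℝ,
      t ∈ Set.Icc (((k : ℕ) : ℝ) * dtn T Nt n) ((((k : ℕ) : ℝ) + 1) * dtn T Nt n) →
      ev hT.le (interp n s) t = gpt d Ns n (s k.castSucc) +
        ((t - ((k : ℕ) : ℝ) * dtn T Nt n) / dtn T Nt n) •
          (gpt d Ns n (s k.succ) - gpt d Ns n (s k.castSucc))) :
    ∃ C > (0 : ℝ), ∀ n,
      (∀ k ≤ Nt n, ∀ i ∈ gridIdx d Ns n, |U n k i| ≤ C) ∧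
      (∫ γ, (∑ k : Fin (Nt n), dtn T Nt n *
          ‖(dtn T Nt n)⁻¹ • (ev hT.le γ ((((k : ℕ) : ℝ) + 1) * dtn T Nt n) -
            ev hT.le γ (((k : ℕ) : ℝ) * dtn T Nt n))‖ ^ q)
        ∂(xiMeas d T Ns Nt m0 n (P n) (interp n))) ≤ C := by
  obtain ⟨R, hR0, hR⟩ := exists_eps_mul_log_card_gridIdx_le (fun n => (heps n).le) hNsInfty hepsO
  have hℓ0 : ℓ 0 ≤ Cℓ := by
    simpa [Real.zero_rpow (by linarith : q ≠ 0)] using (hgrowth 0).2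
  have hℓ : ∀ α, -Cℓ ≤ ℓ α := fun α => by
    nlinarith [(hgrowth α).1, Real.rpow_nonneg (norm_nonneg α) q]
  set B := Cb + T * (Cℓ + Cb) + R
  have hB : 0 < B := by nlinarith
  have hU : ∀ n, ∀ k ≤ Nt n, ∀ i ∈ gridIdx d Ns n, |U n k i| ≤ B := fun n k hk i hi =>
    ((hsol n).abs_value_le hT.le (hNt n) (heps n).le hCb.le hℓ hℓ0 hbound hk hi).trans
      (by linarith [hR n])
  refine ⟨max B ((2 * B + T * (Cℓ + Cb) + R) / lo), lt_max_of_lt_left hB, fun n =>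
    ⟨fun k hk i hi => (hU n k hk i hi).trans (le_max_left _ _), ?_⟩⟩
  rw [(hsol n).integral_energy_eq hT (hNt n) q (interp n) (hinterp n)]
  refine le_max_of_le_right ((le_div_iff₀ hlo).2 ?_)
  have := (hsol n).energy_sum_le hT.le (hNt n) (heps n).le (fun α => (hgrowth α).1)
    (fun m hm x => (hbound m hm x).1) (hU n)
  linarith [hR n]

/-- Lemma 4.1 of the paper: under (H3) and `ε_n = O(1/(N^t_n log N^s_n))`, the value
functions `U_n` are uniformly bounded on the grids, and the expected kinetic energy
`E_{ξ_n}(∫_0^T |γ̇|^q dt)` is uniformly bounded. -/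
theorem discrete_mfg_uniform_bounds
    (d : ℕ) (T : ℝ) (hT : 0 < T) (q : ℝ) (hq : 1 < q)
    [MeasurableSpace (PathSpace T d)] [BorelSpace (PathSpace T d)]
    -- (H3)(i)
    (ℓ : (Fin d → ℝ) → ℝ) (hlcont : Continuous ℓ)
    (lo hi Cℓ : ℝ) (hlo : 0 < lo) (hhi : 0 < hi) (hCℓ : 0 < Cℓ)
    (hgrowth : ∀ α : Fin d → ℝ, lo * ‖α‖ ^ q - Cℓ ≤ ℓ α ∧ ℓ α ≤ hi * ‖α‖ ^ q + Cℓ)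
    -- (H3)(ii)
    (f g : (Fin d → ℝ) → Measure (Fin d → ℝ) → ℝ)
    (Cb : ℝ) (hCb : 0 < Cb)
    (hbound : ∀ m, IsP1 m → ∀ x, |f x m| ≤ Cb ∧ |g x m| ≤ Cb)
    (hxLip : ∀ m, IsP1 m → ∀ x y,
      |f x m - f y m| ≤ Cb * ‖x - y‖ ∧ |g x m - g y m| ≤ Cb * ‖x - y‖)
    (hcont : ∀ x m, IsP1 m → ∀ ε > (0 : ℝ), ∃ δ > (0 : ℝ), ∀ y m', IsP1 m' →
      ‖y - x‖ < δ → W1 m m' < δ → |f y m' - f x m| < ε ∧ |g y m' - g x m| < ε)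
    -- (H3)(iii)
    (m0 : Measure (Fin d → ℝ)) (hm0 : IsProbabilityMeasure m0)
    (hm0supp : ∃ R : ℝ, m0 (Metric.closedBall 0 R)ᶜ = 0)
    -- the grids
    (Ns Nt : ℕ → ℕ) (hNs : ∀ n, 0 < Ns n) (hNt : ∀ n, 0 < Nt n)
    (hNsInfty : Tendsto (fun n => (Ns n : ℝ)) atTop atTop)
    (hNtInfty : Tendsto (fun n => (Nt n : ℝ)) atTop atTop)
    (eps : ℕ → ℝ) (heps : ∀ n, 0 < eps n) (heps0 : Tendsto eps atTop (𝓝 0))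
    -- ε_n = O(1/(N^t_n log N^s_n))
    (hepsO : ∃ Kb : ℝ, ∀ n, eps n * ((Nt n : ℝ) * Real.log (Ns n)) ≤ Kb)
    -- the solutions of the finite MFGs and the induced path measures
    (U M : ℕ → ℕ → (Fin d → ℤ) → ℝ)
    (P : ℕ → ℕ → (Fin d → ℤ) → (Fin d → ℤ) → ℝ)
    (hsol : ∀ n, SolvesDiscreteMFG d T Ns Nt eps ℓ f g m0 n (U n) (M n) (P n))
    (interp : (n : ℕ) → (Fin (Nt n + 1) → Fin d → ℤ) → PathSpace T d)
    (hinterp : ∀ n, ∀ s : Fin (Nt n + 1) → Fin d → ℤ, ∀ k : Fin (Nt n), ∀ t : ℝ,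
      t ∈ Set.Icc (((k : ℕ) : ℝ) * dtn T Nt n) ((((k : ℕ) : ℝ) + 1) * dtn T Nt n) →
      ev hT.le (interp n s) t = gpt d Ns n (s k.castSucc) +
        ((t - ((k : ℕ) : ℝ) * dtn T Nt n) / dtn T Nt n) •
          (gpt d Ns n (s k.succ) - gpt d Ns n (s k.castSucc))) :
    ∃ C > (0 : ℝ), ∀ n,
      (∀ k ≤ Nt n, ∀ i ∈ gridIdx d Ns n, |U n k i| ≤ C) ∧
      (∫ γ, (∑ k : Fin (Nt n), dtn T Nt n *
          ‖(dtn T Nt n)⁻¹ • (ev hT.le γ ((((k : ℕ) : ℝ) + 1) * dtn T Nt n) -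
            ev hT.le γ (((k : ℕ) : ℝ) * dtn T Nt n))‖ ^ q)
        ∂(xiMeas d T Ns Nt m0 n (P n) (interp n))) ≤ C :=
  discrete_mfg_uniform_bounds_general d T hT q hq ℓ lo hi Cℓ hlo hCℓ hgrowth f g Cb hCb hbound m0 Ns
    Nt hNt hNsInfty eps heps hepsO U M P hsol interp hinterp
end
end
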